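/- arXiv:1902.07886 — 3 statements merged into one kernel-verified Lean document; each statement's English description precedes it below -/
import Mathlib

section
/- (Rohlin lemma for tiles, Ornstein–Weiss) Let G be a countable amenable group (i.e., G admits a Følner sequence), let T be a tile for G, and let G ↷ (X, μ) be an essentially free p.m.p. action on a standard probability space. Then for every ε > 0 there exists a Borel subset B ⊆ X such that the family {tB}_{t ∈ T} is pairwise disjoint and μ(⋃_{t ∈ T} tB) > 1 − ε. -/
open MeasureTheory Filter
open scoped symmDiff Classical

/-- A probability-measure-preserving action of a group `G` on `(X, μ)`:
a homomorphism from `G` to the measure-preserving Borel automorphisms of `(X, μ)`. -/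
structure PMP (G : Type*) [Group G] (X : Type*) [MeasurableSpace X]
    (μ : MeasureTheory.Measure X) where
  act : G → X ≃ᵐ X
  act_one : ∀ x : X, act 1 x = x
  act_mul : ∀ g h : G, ∀ x : X, act (g * h) x = act g (act h x)
  preserves : ∀ g : G, MeasureTheory.MeasurePreserving (act g) μ μ

namespace PMP

variable {G : Type*} [Group G] {X : Type*} [MeasurableSpace X] {μ : MeasureTheory.Measure X}

/-- An action is essentially free if a.e. point has trivial stabilizer. -/
def EssFree (α : PMP G X μ) : Prop :=
  ∀ᵐ x ∂μ, ∀ g : G, g ≠ 1 → α.act g x ≠ x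

/-- The orbit of a point under a p.m.p. action. -/
def orbit (α : PMP G X μ) (x : X) : Set X := Set.range fun g => α.act g x

/-- Two actions are orbit equivalent if some measure-preserving automorphism `R`
satisfies `G^α x = R G^β R⁻¹ x` for a.e. `x`. -/
def OrbitEquiv (α β : PMP G X μ) : Prop :=
  ∃ R : X ≃ᵐ X, MeasureTheory.MeasurePreserving R μ μ ∧
    ∀ᵐ x ∂μ, α.orbit x = R '' β.orbit (R.symm x)

end PMP

/-- A finite subset `T` of a group `G` is a tile if the right translates `Tc`,
`c ∈ C`, partition `G` for a suitable `C ⊆ G`. -/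
def IsTile {G : Type*} [Group G] (T : Finset G) : Prop :=
  ∃ C : Set G,
    (C.Pairwise fun c d => Disjoint ((fun t => t * c) '' (T : Set G)) ((fun t => t * d) '' (T : Set G))) ∧
    (⋃ c ∈ C, (fun t => t * c) '' (T : Set G)) = Set.univ

/-- A Følner sequence: nonempty finite sets that are asymptotically invariant. -/
def IsFolnerSeq {G : Type*} [Group G] (F : ℕ → Finset G) : Prop :=
  (∀ n, (F n).Nonempty) ∧
  ∀ g : G, Filter.Tendsto
    (fun n => ((((F n).image (fun t => g * t)) ∆ (F n)).card : ℝ) / ((F n).card : ℝ))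
    Filter.atTop (nhds 0)

/-- `T` is `(F, ε)`-invariant: `|T ∆ gT| < ε |T|` for every `g ∈ F`. -/
def IsInv {G : Type*} [Group G] (F T : Finset G) (ε : ℝ) : Prop :=
  ∀ g ∈ F, (((T ∆ (T.image (fun t => g * t))).card : ℝ)) < ε * T.card

/-!
Ornstein–Weiss. A castle is a family of towers `f • A i`, `f ∈ S i`, with pairwise disjoint
levels. Using Følner sets `F 0, …, F (N - 1)` such that each `F r` is almost invariant under
`(F m)⁻¹` for `m > r`, the castle is built in `N` rounds. Round `m` runs greedily along a
countable Borel cover by sets whose `F m`-translates are disjoint (the action is free and `X` is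
standard), giving every point with at most `ε |F m|` covered `F m`-translates a tower whose
shape is the rest of `F m`. Afterwards a.e. point has more than `ε |F m|` of its
`F m`-translates covered, and double counting shows that the uncovered measure has dropped by
the factor `1 - ε` up to `O(ε²)`, so after `N` rounds it is `O(ε)`. The shapes are almost
`T T⁻¹`-invariant, so tiling each of them by translates `T c` and letting `B` be the union of the
levels `c • A i` loses only `O(ε |T|)`.
-/

open scoped Pointwise ENNReal

universe u

lemma exists_measurableSet_seq_separating {X : Type*} [MeasurableSpace X]
    [HasCountableSeparatingOn X MeasurableSet Set.univ] :
    ∃ S : ℕ × Bool → Set X, (∀ p, MeasurableSet (S p)) ∧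
      ∀ x y, x ≠ y → ∃ p, x ∈ S p ∧ y ∉ S p := by
  obtain ⟨S, hS, hsep⟩ := exists_seq_separating X MeasurableSet.empty Set.univ
  refine ⟨fun p => {x | x ∈ S p.1 ↔ p.2}, fun p => ((hS p.1).mem.iff measurable_const).setOf,
    fun x y hxy => ?_⟩
  obtain ⟨n, hn⟩ : ∃ n, ¬(x ∈ S n ↔ y ∈ S n) := by
    by_contra! h
    exact hxy (hsep x trivial y trivial h)
  exact ⟨(n, decide (x ∈ S n)), by simp, by simpa [iff_comm] using hn⟩

lemma natCast_le_ofReal_mul {m n : ℕ} {c : ℝ} (h : (m : ℝ) ≤ c * n) :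
    (m : ℝ≥0∞) ≤ ENNReal.ofReal c * n := by
  rw [← ENNReal.ofReal_natCast m, ← ENNReal.ofReal_natCast n,
    ← ENNReal.ofReal_mul' n.cast_nonneg]
  exact ENNReal.ofReal_le_ofReal h

lemma ofReal_mul_le_natCast {m n : ℕ} {c : ℝ} (h : c * n ≤ m) :
    ENNReal.ofReal c * n ≤ m := by
  rw [← ENNReal.ofReal_natCast m, ← ENNReal.ofReal_natCast n,
    ← ENNReal.ofReal_mul' n.cast_nonneg]
  exact ENNReal.ofReal_le_ofReal h

section Finitary

variable {G : Type*} [Group G]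

theorem card_mul_sdiff_le_of_subset {K S V : Finset G} {ε : ℝ} (hSV : S ⊆ V)
    (hS : ((V \ S).card : ℝ) ≤ ε * V.card) (hV : (((K * V) \ V).card : ℝ) ≤ ε * V.card)
    (hε : ε ≤ 1 / 2) : (((K * S) \ S).card : ℝ) ≤ 4 * ε * S.card := by
  have hsub : (K * S) \ S ⊆ ((K * V) \ V) ∪ (V \ S) := by
    intro x hx
    rw [Finset.mem_sdiff] at hx
    by_cases hxV : x ∈ V
    · exact Finset.mem_union_right _ (Finset.mem_sdiff.2 ⟨hxV, hx.2⟩)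
    · exact Finset.mem_union_left _
        (Finset.mem_sdiff.2 ⟨Finset.mul_subset_mul_left hSV hx.1, hxV⟩)
  have hcard : (((K * S) \ S).card : ℝ) ≤ ((K * V) \ V).card + (V \ S).card := by
    exact_mod_cast (Finset.card_le_card hsub).trans (Finset.card_union_le _ _)
  have hVS : (V.card : ℝ) = (V \ S).card + S.card := by
    exact_mod_cast (Finset.card_sdiff_add_card_eq_card hSV).symm
  nlinarith [(V \ S).card.cast_nonneg (α := ℝ)]

theorem IsFolnerSeq.exists_card_mul_sdiff_le {F : ℕ → Finset G} (hF : IsFolnerSeq F)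
    (K : Finset G) {δ : ℝ} (hδ : 0 < δ) :
    ∃ V : Finset G, V.Nonempty ∧ (((K * V) \ V).card : ℝ) ≤ δ * V.card := by
  obtain ⟨hne, htendsto⟩ := hF
  have hδK : 0 < δ / (K.card + 1) := by positivity
  obtain ⟨n, hn⟩ := (Filter.eventually_all_finset K |>.2 fun g _ =>
    (htendsto g).eventually (eventually_lt_nhds hδK)).exists
  refine ⟨F n, hne n, ?_⟩
  have hpos : (0 : ℝ) < (F n).card := by exact_mod_cast (hne n).card_pos
  have hsub : (K * F n) \ F n ⊆ K.biUnion fun g => ((F n).image (g * ·)) ∆ F n := by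
    intro x hx
    obtain ⟨hx, hxF⟩ := Finset.mem_sdiff.1 hx
    obtain ⟨g, hg, y, hy, rfl⟩ := Finset.mem_mul.1 hx
    exact Finset.mem_biUnion.2
      ⟨g, hg, Finset.mem_symmDiff.2 (Or.inl ⟨Finset.mem_image_of_mem _ hy, hxF⟩)⟩
  calc (((K * F n) \ F n).card : ℝ)
      ≤ ∑ g ∈ K, ((((F n).image (g * ·)) ∆ F n).card : ℝ) := by
        exact_mod_cast (Finset.card_le_card hsub).trans Finset.card_biUnion_le
    _ ≤ ∑ _g ∈ K, δ / (K.card + 1) * (F n).card :=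
        Finset.sum_le_sum fun g hg => ((div_lt_iff₀ hpos).1 (hn g hg)).le
    _ = K.card / (K.card + 1) * δ * (F n).card := by
        rw [Finset.sum_const, nsmul_eq_mul]
        ring
    _ ≤ δ * (F n).card := by
        gcongr
        exact mul_le_of_le_one_left hδ.le (div_le_one_of_le₀ (by linarith) (by positivity))

theorem IsFolnerSeq.exists_chain {F : ℕ → Finset G} (hF : IsFolnerSeq F) (K : Finset G)
    {δ : ℝ} (hδ : 0 < δ) (N : ℕ) :
    ∃ V : ℕ → Finset G, (∀ m, (V m).Nonempty) ∧
      (∀ m, (((K * V m) \ V m).card : ℝ) ≤ δ * (V m).card) ∧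
      ∀ r m, r < m → m < N → ((((V m)⁻¹ * V r) \ V r).card : ℝ) ≤ δ * (V r).card := by
  induction N with
  | zero =>
    obtain ⟨V, hne, hV⟩ := hF.exists_card_mul_sdiff_le K hδ
    exact ⟨fun _ => V, fun _ => hne, fun _ => hV, fun _ _ _ h => absurd h (Nat.not_lt_zero _)⟩
  | succ N ih =>
    obtain ⟨V, hne, hK, hchain⟩ := ih
    obtain ⟨W, hWne, hW⟩ :=
      hF.exists_card_mul_sdiff_le (K ∪ (Finset.range N).biUnion fun m => (V m)⁻¹) hδ
    have hW_mono {K'} (hK' : K' ⊆ K ∪ (Finset.range N).biUnion fun m => (V m)⁻¹) :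
        (((K' * W) \ W).card : ℝ) ≤ δ * W.card :=
      le_trans (by gcongr) hW
    refine ⟨fun | 0 => W | m + 1 => V m, ?_, ?_, ?_⟩
    · rintro (_ | m)
      exacts [hWne, hne m]
    · rintro (_ | m)
      exacts [hW_mono Finset.subset_union_left, hK m]
    · rintro (_ | r) (_ | m) hrm hmN
      · exact absurd hrm (lt_irrefl 0)
      · exact hW_mono ((Finset.subset_biUnion_of_mem (fun m => (V m)⁻¹)
          (Finset.mem_range.2 (Nat.lt_of_succ_lt_succ hmN))).trans Finset.subset_union_right)
      · exact absurd hrm (Nat.not_lt_zero _)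
      · exact hchain r m (Nat.lt_of_succ_lt_succ hrm) (Nat.lt_of_succ_lt_succ hmN)

theorem IsTile.exists_injOn_mul {T : Finset G} (hT : IsTile T) :
    ∃ C : Set G, ((T : Set G) ×ˢ C).InjOn (fun p => p.1 * p.2) ∧
      ∀ g, ∃ t ∈ T, ∃ c ∈ C, t * c = g := by
  obtain ⟨C, hdisj, hcover⟩ := hT
  refine ⟨C, ?_, fun g => ?_⟩
  · rintro ⟨t, c⟩ ⟨ht, hc⟩ ⟨t', c'⟩ ⟨ht', hc'⟩ (heq : t * c = t' * c')
    obtain rfl : c = c' := by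
      by_contra hne
      exact Set.disjoint_left.1 (hdisj hc hc' hne) ⟨t, ht, rfl⟩ ⟨t', ht', heq.symm⟩
    rw [mul_right_cancel heq]
  · obtain ⟨c, hc, t, ht, rfl⟩ := Set.mem_iUnion₂.1 (hcover ▸ Set.mem_univ g)
    exact ⟨t, ht, c, hc, rfl⟩

/-- Every tile `T c` meeting `S` but not inside it contains a point of `T T⁻¹ S \ S`. -/
theorem exists_finset_card_le_of_tiling {T : Finset G} {C : Set G}
    (hinj : ((T : Set G) ×ˢ C).InjOn (fun p => p.1 * p.2))
    (hcover : ∀ g, ∃ t ∈ T, ∃ c ∈ C, t * c = g) (S : Finset G) :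
    ∃ Cs : Finset G, (Cs : Set G) ⊆ C ∧ T * Cs ⊆ S ∧
      S.card ≤ (T * Cs).card + T.card * ((T * T⁻¹ * S) \ S).card := by
  choose τ hτ φ hφ hτφ using hcover
  set Cs := (S.image φ).filter fun c => ∀ t ∈ T, t * c ∈ S
  have hbad : ∀ g ∈ S \ (T * Cs), ∃ t ∈ T, t * φ g ∉ S := by
    intro g hg
    obtain ⟨hgS, hgT⟩ := Finset.mem_sdiff.1 hg
    by_contra! h
    exact hgT (hτφ g ▸ Finset.mul_mem_mul (hτ g)
      (Finset.mem_filter.2 ⟨Finset.mem_image_of_mem φ hgS, h⟩))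
  choose! w hwT hwS using hbad
  have hφ_eq (g : G) : φ g = (τ g)⁻¹ * g := eq_inv_mul_of_mul_eq (hτφ g)
  have hsdiff : (S \ (T * Cs)).card ≤ (T ×ˢ ((T * T⁻¹ * S) \ S)).card := by
    refine Finset.card_le_card_of_injOn (fun g => (τ g, w g * φ g)) (fun g hg => ?_) ?_
    · refine Finset.mem_product.2 ⟨hτ g, Finset.mem_sdiff.2 ⟨?_, hwS g hg⟩⟩
      dsimp only
      rw [hφ_eq, ← mul_assoc]
      exact Finset.mul_mem_mul (Finset.mul_mem_mul (hwT g hg) (Finset.inv_mem_inv (hτ g)))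
        (Finset.mem_sdiff.1 hg).1
    · intro g hg g' hg' heq
      obtain ⟨hτ_eq, hw_eq⟩ := Prod.mk.inj heq
      have := hinj (x₁ := (w g, φ g)) (x₂ := (w g', φ g')) ⟨hwT g hg, hφ g⟩
        ⟨hwT g' hg', hφ g'⟩ hw_eq
      rw [← hτφ g, ← hτφ g', hτ_eq, (Prod.mk.inj this).2]
  refine ⟨Cs, fun c hc => ?_, fun x hx => ?_, ?_⟩
  · obtain ⟨g, -, rfl⟩ := Finset.mem_image.1 (Finset.mem_filter.1 hc).1
    exact hφ g
  · obtain ⟨t, ht, c, hc, rfl⟩ := Finset.mem_mul.1 hx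
    exact (Finset.mem_filter.1 hc).2 t ht
  · rw [Finset.card_product] at hsdiff
    have := Finset.card_le_card_sdiff_add_card (s := S) (t := T * Cs)
    omega

end Finitary

namespace PMP

variable {G : Type u} [Group G] {X : Type*} [MeasurableSpace X] {μ : Measure X}
  (α : PMP G X μ)

@[simp]
lemma act_inv_act (g : G) (x : X) : α.act g⁻¹ (α.act g x) = x := by
  rw [← α.act_mul, inv_mul_cancel, α.act_one]

@[simp]
lemma act_act_inv (g : G) (x : X) : α.act g (α.act g⁻¹ x) = x := by
  rw [← α.act_mul, mul_inv_cancel, α.act_one]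

lemma mem_image_act_iff {g : G} {A : Set X} {x : X} :
    x ∈ α.act g '' A ↔ α.act g⁻¹ x ∈ A :=
  ⟨by rintro ⟨a, ha, rfl⟩; simpa, fun h => ⟨_, h, α.act_act_inv g x⟩⟩

lemma image_act_image_act (g h : G) (A : Set X) :
    α.act g '' (α.act h '' A) = α.act (g * h) '' A := by
  rw [Set.image_image]
  exact Set.image_congr fun x _ => (α.act_mul g h x).symm

lemma measurableSet_image_act (g : G) {A : Set X} (hA : MeasurableSet A) :
    MeasurableSet (α.act g '' A) :=
  (α.act g).measurableSet_image.2 hA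

lemma measure_image_act (g : G) (A : Set X) : μ (α.act g '' A) = μ A := by
  rw [(α.act g).image_eq_preimage_symm]
  exact ((α.preserves g).symm _).measure_preimage_equiv A

/-- The tower with base `A` and shape `S`; its levels are the translates `f • A`, `f ∈ S`. -/
def tower (A : Set X) (S : Finset G) : Set X := ⋃ f ∈ S, α.act f '' A

lemma measurableSet_tower {A : Set X} (hA : MeasurableSet A) (S : Finset G) :
    MeasurableSet (α.tower A S) :=
  Finset.measurableSet_biUnion S fun f _ => α.measurableSet_image_act f hA

lemma measure_tower_le (A : Set X) (S : Finset G) : μ (α.tower A S) ≤ S.card * μ A :=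
  (measure_biUnion_finset_le S _).trans (by simp [α.measure_image_act])

lemma measure_tower {A : Set X} (hA : MeasurableSet A) {S : Finset G}
    (hS : (S : Set G).PairwiseDisjoint fun f => α.act f '' A) :
    μ (α.tower A S) = S.card * μ A := by
  rw [tower, measure_biUnion_finset hS fun f _ => α.measurableSet_image_act f hA]
  simp [α.measure_image_act]

variable {ι : Type*}

def castle (A : ι → Set X) (S : ι → Finset G) : Set X := ⋃ i, α.tower (A i) (S i)

structure IsCastle (A : ι → Set X) (S : ι → Finset G) : Prop where
  measurableSet : ∀ i, MeasurableSet (A i)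
  disjoint : ∀ ⦃i j : ι⦄ ⦃f g : G⦄, f ∈ S i → g ∈ S j → (i, f) ≠ (j, g) →
    Disjoint (α.act f '' A i) (α.act g '' A j)

variable {α} {A : ι → Set X} {S : ι → Finset G}

lemma mem_castle {x : X} : x ∈ α.castle A S ↔ ∃ i, ∃ f ∈ S i, x ∈ α.act f '' A i := by
  simp [castle, tower]

lemma image_act_subset_castle {i : ι} {f : G} (hf : f ∈ S i) :
    α.act f '' A i ⊆ α.castle A S :=
  fun _ hx => mem_castle.2 ⟨i, f, hf, hx⟩

lemma mem_image_act_castle {t : G} {x : X} :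
    x ∈ α.act t '' α.castle A S ↔ ∃ i, ∃ c ∈ S i, x ∈ α.act (t * c) '' A i := by
  simp only [castle, tower, Set.image_iUnion, ← α.image_act_image_act, Set.mem_iUnion,
    exists_prop]

lemma tower_castle (A : ι → Set X) (Cs : ι → Finset G) (T : Finset G) :
    α.tower (α.castle A Cs) T = α.castle A (fun i => T * Cs i) := by
  ext x
  simp only [tower, Set.mem_iUnion, exists_prop, mem_image_act_castle, mem_castle,
    Finset.mem_mul]
  constructor
  · rintro ⟨t, ht, i, c, hc, hx⟩
    exact ⟨i, t * c, ⟨t, ht, c, hc, rfl⟩, hx⟩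
  · rintro ⟨i, _, ⟨t, ht, c, hc, rfl⟩, hx⟩
    exact ⟨t, ht, i, c, hc, hx⟩

lemma castle_sumElim {κ : Type*} (A' : κ → Set X) (S' : κ → Finset G) :
    α.castle (Sum.elim A A') (Sum.elim S S') = α.castle A S ∪ α.castle A' S' :=
  Set.iUnion_sum

lemma castle_uncurry {κ : Type*} (A : κ → ι → Set X) (S : κ → ι → Finset G) :
    α.castle (Function.uncurry A) (Function.uncurry S) = ⋃ k, α.castle (A k) (S k) :=
  Set.iUnion_prod' _

lemma compl_castle_inter_subset (F : Finset G) :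
    (α.castle A S)ᶜ ∩ {x | ∃ f ∈ F, α.act f x ∈ α.castle A S} ⊆
      α.castle A (fun i => (F⁻¹ * S i) \ S i) := by
  rintro x ⟨hxU, f, hf, hfx⟩
  obtain ⟨i, g, hg, hgx⟩ := mem_castle.1 hfx
  have hx : x ∈ α.act (f⁻¹ * g) '' A i := by
    rw [α.mem_image_act_iff] at hgx ⊢
    rwa [mul_inv_rev, inv_inv, α.act_mul]
  refine mem_castle.2 ⟨i, f⁻¹ * g, Finset.mem_sdiff.2 ⟨?_, fun h => hxU ?_⟩, hx⟩
  · exact Finset.mul_mem_mul (Finset.inv_mem_inv hf) hg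
  · exact image_act_subset_castle h hx

lemma measure_castle_le [Countable ι] : μ (α.castle A S) ≤ ∑' i, (S i).card * μ (A i) :=
  (measure_iUnion_le _).trans (ENNReal.tsum_le_tsum fun _ => α.measure_tower_le _ _)

namespace IsCastle

lemma mono (h : α.IsCastle A S) {A' : ι → Set X} {S' : ι → Finset G}
    (hA' : ∀ i, MeasurableSet (A' i)) (hA : ∀ i, A' i ⊆ A i) (hS : ∀ i, S' i ⊆ S i) :
    α.IsCastle A' S' :=
  ⟨hA', fun _ _ _ _ hf hg hne =>
    (h.disjoint (hS _ hf) (hS _ hg) hne).mono (Set.image_mono (hA _)) (Set.image_mono (hA _))⟩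

lemma pairwiseDisjoint_levels (h : α.IsCastle A S) (i : ι) :
    (S i : Set G).PairwiseDisjoint fun f => α.act f '' A i :=
  fun _ hf _ hg hfg => h.disjoint hf hg fun he => hfg (Prod.ext_iff.1 he).2

lemma pairwise_disjoint_towers (h : α.IsCastle A S) :
    Pairwise (Function.onFun Disjoint fun i => α.tower (A i) (S i)) := by
  intro i j hij
  simp only [Function.onFun, tower, Set.disjoint_iUnion_left, Set.disjoint_iUnion_right]
  exact fun g hg f hf => h.disjoint hf hg fun he => hij (Prod.ext_iff.1 he).1

lemma measurableSet_castle [Countable ι] (h : α.IsCastle A S) :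
    MeasurableSet (α.castle A S) :=
  MeasurableSet.iUnion fun i => α.measurableSet_tower (h.measurableSet i) (S i)

lemma measure_castle [Countable ι] (h : α.IsCastle A S) :
    μ (α.castle A S) = ∑' i, (S i).card * μ (A i) := by
  rw [castle, measure_iUnion h.pairwise_disjoint_towers
    fun i => α.measurableSet_tower (h.measurableSet i) (S i)]
  exact tsum_congr fun i => α.measure_tower (h.measurableSet i) (h.pairwiseDisjoint_levels i)

lemma sumElim {κ : Type*} {A' : κ → Set X} {S' : κ → Finset G} (h : α.IsCastle A S)
    (h' : α.IsCastle A' S') (hd : Disjoint (α.castle A S) (α.castle A' S')) :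
    α.IsCastle (Sum.elim A A') (Sum.elim S S') := by
  refine ⟨fun i => i.rec h.measurableSet h'.measurableSet, ?_⟩
  rintro (i | i) (j | j) f g hf hg hne
  · exact h.disjoint hf hg fun he => hne (by simp_all)
  · exact hd.mono (image_act_subset_castle (A := A) hf) (image_act_subset_castle (A := A') hg)
  · exact hd.symm.mono (image_act_subset_castle (A := A') hf) (image_act_subset_castle (A := A) hg)
  · exact h'.disjoint hf hg fun he => hne (by simp_all)

lemma uncurry {κ : Type*} {A : κ → ι → Set X} {S : κ → ι → Finset G}
    (h : ∀ k, α.IsCastle (A k) (S k))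
    (hd : Pairwise (Function.onFun Disjoint fun k => α.castle (A k) (S k))) :
    α.IsCastle (Function.uncurry A) (Function.uncurry S) := by
  refine ⟨fun p => (h p.1).measurableSet p.2, ?_⟩
  rintro ⟨k, i⟩ ⟨l, j⟩ f g hf hg hne
  by_cases hkl : k = l
  · subst hkl
    exact (h k).disjoint hf hg fun he => hne (by simp_all)
  · exact (hd hkl).mono (image_act_subset_castle (A := A k) hf)
      (image_act_subset_castle (A := A l) hg)

lemma measure_compl_inter_le [Countable ι] (h : α.IsCastle A S) (F : Finset G)
    {c : ℝ} (hc : ∀ i, (A i).Nonempty →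
      (((F⁻¹ * S i) \ S i).card : ℝ) ≤ c * (S i).card) :
    μ ((α.castle A S)ᶜ ∩ {x | ∃ f ∈ F, α.act f x ∈ α.castle A S}) ≤
      ENNReal.ofReal c * μ (α.castle A S) :=
  calc _ ≤ μ (α.castle A (fun i => (F⁻¹ * S i) \ S i)) :=
        measure_mono (compl_castle_inter_subset F)
    _ ≤ ∑' i, (((F⁻¹ * S i) \ S i).card : ℝ≥0∞) * μ (A i) := measure_castle_le
    _ ≤ ∑' i, ENNReal.ofReal c * ((S i).card * μ (A i)) := by
      refine ENNReal.tsum_le_tsum fun i => ?_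
      rcases (A i).eq_empty_or_nonempty with hA | hA
      · simp [hA]
      · rw [← mul_assoc]
        exact mul_le_mul_left (natCast_le_ofReal_mul (hc i hA)) _
    _ = ENNReal.ofReal c * μ (α.castle A S) := by rw [ENNReal.tsum_mul_left, h.measure_castle]

end IsCastle

variable (α)

lemma exists_cover_disjoint_translates [HasCountableSeparatingOn X MeasurableSet Set.univ]
    (K : Finset G) :
    ∃ P : ℕ → Set X, (∀ n, MeasurableSet (P n)) ∧
      (∀ n, ∀ g ∈ K, Disjoint (α.act g '' P n) (P n)) ∧
      ∀ x, (∀ g ∈ K, α.act g x ≠ x) → ∃ n, x ∈ P n := by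
  obtain ⟨S, hS, hsep⟩ := exists_measurableSet_seq_separating (X := X)
  obtain ⟨c, hc⟩ := exists_surjective_nat (K → ℕ × Bool)
  refine ⟨fun n => {x | ∀ g : K, x ∈ S (c n g) ∧ α.act g x ∉ S (c n g)}, fun n => ?_, ?_,
    ?_⟩
  · exact (Measurable.forall fun g : K =>
      (hS _).mem.and ((hS _).mem.comp (α.act g).measurable).not).setOf
  · intro n g hg
    rw [Set.disjoint_left]
    rintro _ ⟨x, hx, rfl⟩ hgx
    exact (hx ⟨g, hg⟩).2 (hgx ⟨g, hg⟩).1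
  · intro x hx
    choose p hp using fun g : K => hsep x (α.act g x) (hx g g.2).symm
    obtain ⟨n, rfl⟩ := hc p
    exact ⟨n, hp⟩

lemma pairwiseDisjoint_image_act {F : Finset G} {P : Set X}
    (hP : ∀ g ∈ (F⁻¹ * F).erase 1, Disjoint (α.act g '' P) P) :
    (F : Set G).PairwiseDisjoint fun f => α.act f '' P := by
  intro f hf f' hf' hff'
  rw [Function.onFun, Set.disjoint_left]
  rintro _ ⟨x, hx, rfl⟩ ⟨y, hy, hxy⟩
  have hmem : f⁻¹ * f' ∈ (F⁻¹ * F).erase 1 :=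
    Finset.mem_erase.2 ⟨fun h => hff' (inv_mul_eq_one.1 h), Finset.mul_mem_mul (by simpa) hf'⟩
  refine Set.disjoint_left.1 (hP _ hmem) ⟨y, hy, ?_⟩ hx
  rw [α.act_mul, hxy, act_inv_act]

lemma isCastle_of_subset {ι : Type*} {F : Finset G} {P : Set X}
    (hP : (F : Set G).PairwiseDisjoint fun f => α.act f '' P) {A : ι → Set X}
    {S : ι → Finset G} (hA : ∀ i, MeasurableSet (A i)) (hAP : ∀ i, A i ⊆ P)
    (hAd : Pairwise (Function.onFun Disjoint A)) (hSF : ∀ i, S i ⊆ F) : α.IsCastle A S := by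
  refine ⟨hA, fun i j f g hf hg hne => ?_⟩
  by_cases hfg : f = g
  · subst hfg
    have hij : i ≠ j := fun h => hne (by rw [h])
    exact (Set.disjoint_image_iff (α.act f).injective).2 (hAd hij)
  · exact (hP (hSF i hf) (hSF j hg) hfg).mono (Set.image_mono (hAP i)) (Set.image_mono (hAP j))

noncomputable def hits (F : Finset G) (U : Set X) (x : X) : Finset G :=
  F.filter fun f => α.act f x ∈ U

lemma mem_hits {F : Finset G} {U : Set X} {x : X} {f : G} :
    f ∈ α.hits F U x ↔ f ∈ F ∧ α.act f x ∈ U :=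
  Finset.mem_filter

lemma hits_subset {F : Finset G} {U : Set X} {x : X} : α.hits F U x ⊆ F :=
  Finset.filter_subset _ F

lemma hits_mono {F : Finset G} {U V : Set X} (h : U ⊆ V) (x : X) :
    α.hits F U x ⊆ α.hits F V x :=
  fun _ hf => α.mem_hits.2 ⟨(α.mem_hits.1 hf).1, h (α.mem_hits.1 hf).2⟩

lemma measurableSet_hits_eq [Countable G] (F : Finset G) {U : Set X} (hU : MeasurableSet U)
    (s : Finset G) : MeasurableSet {x | α.hits F U x = s} := by
  have : {x | α.hits F U x = s} = {x | ∀ f, (f ∈ F ∧ α.act f x ∈ U) ↔ f ∈ s} := by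
    ext x
    simp [hits, Finset.ext_iff]
  rw [this]
  exact (Measurable.forall fun f =>
    (measurable_const.and (hU.mem.comp (α.act f).measurable)).iff measurable_const).setOf

section Stage

variable (F : Finset G) (ε : ℝ)

/-- Each point of `stageBase F ε P U s` will carry a tower of shape `F \ s`: its translates not
yet in `U`. -/
def stageBase (P U : Set X) (s : Finset G) : Set X :=
  {x ∈ P | α.hits F U x = s ∧ (s.card : ℝ) ≤ ε * F.card}

noncomputable def stageCover (P : ℕ → Set X) (U : Set X) : ℕ → Set X
  | 0 => U
  | n + 1 => stageCover P U n ∪ α.castle (α.stageBase F ε (P n) (stageCover P U n)) (F \ ·)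

lemma stageCover_succ (P : ℕ → Set X) (U : Set X) (n : ℕ) :
    α.stageCover F ε P U (n + 1) = α.stageCover F ε P U n ∪
      α.castle (α.stageBase F ε (P n) (α.stageCover F ε P U n)) (F \ ·) :=
  rfl

variable {α F ε} {P U : Set X}

lemma measurableSet_stageBase [Countable G] (hP : MeasurableSet P) (hU : MeasurableSet U)
    (s : Finset G) : MeasurableSet (α.stageBase F ε P U s) :=
  (hP.mem.and ((α.measurableSet_hits_eq F hU s).mem.and measurable_const)).setOf

lemma isCastle_stageBase [Countable G] (hP : MeasurableSet P)
    (hPd : ∀ g ∈ (F⁻¹ * F).erase 1, Disjoint (α.act g '' P) P) (hU : MeasurableSet U) :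
    α.IsCastle (α.stageBase F ε P U) (F \ ·) :=
  α.isCastle_of_subset (α.pairwiseDisjoint_image_act hPd) (measurableSet_stageBase hP hU)
    (fun _ _ hx => hx.1)
    (fun _ _ hss' => Set.disjoint_left.2 fun _ hx hx' => hss' (hx.2.1.symm.trans hx'.2.1))
    (fun _ => Finset.sdiff_subset)

lemma disjoint_castle_stageBase :
    Disjoint (α.castle (α.stageBase F ε P U) (F \ ·)) U := by
  rw [Set.disjoint_left]
  intro x hx hxU
  obtain ⟨s, f, hf, y, hy, rfl⟩ := mem_castle.1 hx
  rw [Finset.mem_sdiff, ← hy.2.1] at hf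
  exact hf.2 (α.mem_hits.2 ⟨hf.1, hxU⟩)

lemma lt_card_hits_stageCover (hF : F.Nonempty) (hε : ε < 1) {P : ℕ → Set X} {n : ℕ} {x : X}
    (hx : x ∈ P n) : ε * F.card < (α.hits F (α.stageCover F ε P U (n + 1)) x).card := by
  rw [stageCover_succ]
  set V := α.stageCover F ε P U n
  by_cases hs : ((α.hits F V x).card : ℝ) ≤ ε * F.card
  · have hF_sub : F ⊆ α.hits F (V ∪ α.castle (α.stageBase F ε (P n) V) (F \ ·)) x := by
      refine fun f hf => α.mem_hits.2 ⟨hf, ?_⟩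
      by_cases hfV : α.act f x ∈ V
      · exact Or.inl hfV
      · refine Or.inr
          (image_act_subset_castle (i := α.hits F V x) ?_ ⟨x, ⟨hx, rfl, hs⟩, rfl⟩)
        exact Finset.mem_sdiff.2 ⟨hf, fun h => hfV (α.mem_hits.1 h).2⟩
    calc ε * F.card < F.card := mul_lt_of_lt_one_left (by exact_mod_cast hF.card_pos) hε
      _ ≤ _ := Nat.cast_le.2 (Finset.card_le_card hF_sub)
  · exact (not_le.1 hs).trans_le
      (Nat.cast_le.2 (Finset.card_le_card (α.hits_mono Set.subset_union_left x)))

end Stage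

variable {α}

/-- Greedy along a countable cover by sets `P n` with disjoint `F`-translates: at step `n`, every
point of `P n` with at most `ε |F|` of its `F`-translates covered gets a tower whose shape is the
uncovered part of `F`. -/
theorem exists_castle_lt_card_hits [Countable G]
    [HasCountableSeparatingOn X MeasurableSet Set.univ] (hα : α.EssFree) {F : Finset G}
    (hF : F.Nonempty) {ε : ℝ} (hε : ε < 1) {U : Set X} (hU : MeasurableSet U) :
    ∃ (A : ℕ × Finset G → Set X) (S : ℕ × Finset G → Finset G), α.IsCastle A S ∧
      (∀ i, (A i).Nonempty → S i ⊆ F ∧ ((F \ S i).card : ℝ) ≤ ε * F.card) ∧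
      Disjoint (α.castle A S) U ∧
      ∀ᵐ x ∂μ, ε * F.card < (α.hits F (U ∪ α.castle A S) x).card := by
  obtain ⟨P, hPm, hPd, hPcover⟩ := α.exists_cover_disjoint_translates ((F⁻¹ * F).erase 1)
  set V := α.stageCover F ε P U
  set W := fun n => α.castle (α.stageBase F ε (P n) (V n)) (F \ ·)
  have hV_succ (n : ℕ) : V (n + 1) = V n ∪ W n := rfl
  have hV_mono : Monotone V := monotone_nat_of_le_succ fun n => Set.subset_union_left
  have hVm (n : ℕ) : MeasurableSet (V n) := by
    induction n with
    | zero => exact hU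
    | succ n ih => exact ih.union (isCastle_stageBase (hPm n) (hPd n) ih).measurableSet_castle
  have hVW (n : ℕ) : V n ⊆ U ∪ ⋃ m, W m := by
    induction n with
    | zero => exact Set.subset_union_left
    | succ n ih =>
      exact Set.union_subset ih (Set.subset_union_of_subset_right (Set.subset_iUnion W n) _)
  have hWV (n : ℕ) : Disjoint (W n) (V n) := disjoint_castle_stageBase
  refine ⟨Function.uncurry fun n => α.stageBase F ε (P n) (V n),
    Function.uncurry fun _ s => F \ s,
    IsCastle.uncurry (fun n => isCastle_stageBase (hPm n) (hPd n) (hVm n)) ?_, ?_, ?_, ?_⟩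
  · refine (pairwise_disjoint_on W).2 fun m n hmn => (hWV n).symm.mono_left ?_
    exact (hV_succ m ▸ Set.subset_union_right).trans (hV_mono hmn)
  · rintro ⟨n, s⟩ ⟨x, -, hs, hcard⟩
    refine ⟨Finset.sdiff_subset, ?_⟩
    rwa [Function.uncurry_apply_pair,
      Finset.sdiff_sdiff_eq_self ((show _ = s from hs) ▸ α.hits_subset)]
  · rw [castle_uncurry, Set.disjoint_iUnion_left]
    exact fun n => (hWV n).mono_right (hV_mono n.zero_le)
  · filter_upwards [hα] with x hx
    obtain ⟨n, hxn⟩ := hPcover x fun g hg => hx g (Finset.ne_of_mem_erase hg)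
    refine (lt_card_hits_stageCover (α := α) (U := U) hF hε hxn).trans_le
      (Nat.cast_le.2 (Finset.card_le_card ?_))
    rw [castle_uncurry]
    exact α.hits_mono (hVW (n + 1)) x

lemma ofReal_mul_measure_le_of_le_card_hits {F : Finset G} (hF : F.Nonempty) {ε : ℝ}
    {I N : Set X} (hI : MeasurableSet I) (hN : MeasurableSet N)
    (h : ∀ᵐ x ∂μ, x ∈ I → ε * F.card ≤ (α.hits F N x).card) :
    ENNReal.ofReal ε * μ I ≤ μ N := by
  have hcount (x : X) :
      ((α.hits F N x).card : ℝ≥0∞) = ∑ f ∈ F, N.indicator 1 (α.act f x) := by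
    simp [hits, Set.indicator_apply, Finset.sum_boole]
  have hcard : (F.card : ℝ≥0∞) ≠ 0 := by simpa using hF.ne_empty
  refine (ENNReal.mul_le_mul_iff_right hcard (by simp)).1 ?_
  calc (F.card : ℝ≥0∞) * (ENNReal.ofReal ε * μ I)
      = ∫⁻ x, I.indicator (fun _ => ENNReal.ofReal (ε * F.card)) x ∂μ := by
        rw [lintegral_indicator_const hI, ENNReal.ofReal_mul' (Nat.cast_nonneg _),
          ENNReal.ofReal_natCast, ← mul_assoc, mul_comm (F.card : ℝ≥0∞)]
    _ ≤ ∫⁻ x, ∑ f ∈ F, N.indicator 1 (α.act f x) ∂μ := by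
        refine lintegral_mono_ae (h.mono fun x hx => ?_)
        by_cases hxI : x ∈ I
        · rw [Set.indicator_of_mem hxI, ← hcount, ← ENNReal.ofReal_natCast]
          exact ENNReal.ofReal_le_ofReal (hx hxI)
        · simp [hxI]
    _ = F.card * μ N := by
        rw [lintegral_finsetSum' F (f := fun f x => N.indicator 1 (α.act f x)) fun f _ =>
          ((measurable_one.indicator hN).comp (α.act f).measurable).aemeasurable]
        simp [(α.preserves _).lintegral_comp (measurable_one.indicator hN),
          lintegral_indicator_one hN]

/-- The uncovered measure shrinks by the factor `1 - ε` up to `ε c` (stated additively, as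
subtraction in `ℝ≥0∞` truncates). Double counting bounds the new towers from below by `ε`
times the measure of the points with no `F`-translate in the old castle, and these are all of the
uncovered points but `c`, by the boundary estimate. -/
theorem IsCastle.exists_extend [Countable G] [HasCountableSeparatingOn X MeasurableSet Set.univ]
    [IsProbabilityMeasure μ] [Countable ι] (h : α.IsCastle A S) (hα : α.EssFree)
    {F : Finset G} (hF : F.Nonempty) {ε c : ℝ} (hε0 : 0 ≤ ε) (hε1 : ε < 1)
    (hc : ∀ i, (A i).Nonempty → (((F⁻¹ * S i) \ S i).card : ℝ) ≤ c * (S i).card) :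
    ∃ (A' : ℕ × Finset G → Set X) (S' : ℕ × Finset G → Finset G),
      α.IsCastle (Sum.elim A A') (Sum.elim S S') ∧
      (∀ i, (A' i).Nonempty → S' i ⊆ F ∧ ((F \ S' i).card : ℝ) ≤ ε * F.card) ∧
      μ (α.castle (Sum.elim A A') (Sum.elim S S'))ᶜ + ENNReal.ofReal ε * μ (α.castle A S)ᶜ
        ≤ μ (α.castle A S)ᶜ + ENNReal.ofReal (ε * c) := by
  obtain ⟨A', S', h', hshape, hdisj, hcover⟩ :=
    exists_castle_lt_card_hits hα hF hε1 h.measurableSet_castle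
  refine ⟨A', S', h.sumElim h' hdisj.symm, hshape, ?_⟩
  rw [castle_sumElim]
  set U := α.castle A S
  set U' := α.castle A' S'
  set I := ⋂ f ∈ F, α.act f ⁻¹' Uᶜ
  have hgain : ENNReal.ofReal ε * μ I ≤ μ U' := by
    refine ofReal_mul_measure_le_of_le_card_hits (α := α) hF
      (Finset.measurableSet_biInter F fun f _ =>
        (α.act f).measurable h.measurableSet_castle.compl) h'.measurableSet_castle ?_
    filter_upwards [hcover] with x hx hxI
    refine hx.le.trans (Nat.cast_le.2 (Finset.card_le_card fun f hf => ?_))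
    obtain ⟨hfF, hfx⟩ := α.mem_hits.1 hf
    exact α.mem_hits.2 ⟨hfF, hfx.resolve_left (Set.mem_iInter₂.1 hxI f hfF)⟩
  have hboundary : μ (Uᶜ ∩ {x | ∃ f ∈ F, α.act f x ∈ U}) ≤ ENNReal.ofReal c :=
    (h.measure_compl_inter_le F hc).trans (mul_le_of_le_one_right' prob_le_one)
  have hsplit : μ Uᶜ ≤ μ I + ENNReal.ofReal c := by
    refine (measure_mono fun x hx => ?_).trans ((measure_union_le _ _).trans (by gcongr))
    by_cases hxI : x ∈ I
    · exact Or.inl hxI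
    · simp only [I, Set.mem_iInter₂, not_forall] at hxI
      obtain ⟨f, hf, hfx⟩ := hxI
      exact Or.inr ⟨hx, f, hf, by simpa using hfx⟩
  have hcompl : μ (U ∪ U')ᶜ + μ U' = μ Uᶜ := by
    rw [← measure_union (disjoint_compl_left.mono_right Set.subset_union_right)
      h'.measurableSet_castle, Set.compl_union, ← Set.sdiff_eq,
      Set.sdiff_union_of_subset (Set.subset_compl_iff_disjoint_right.2 hdisj)]
  calc μ (U ∪ U')ᶜ + ENNReal.ofReal ε * μ Uᶜ
      ≤ μ (U ∪ U')ᶜ + (ENNReal.ofReal ε * μ I + ENNReal.ofReal (ε * c)) := by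
        rw [ENNReal.ofReal_mul hε0, ← mul_add]
        gcongr
    _ ≤ μ (U ∪ U')ᶜ + μ U' + ENNReal.ofReal (ε * c) := by
        rw [← add_assoc]
        gcongr
    _ = μ Uᶜ + ENNReal.ofReal (ε * c) := by rw [hcompl]

/-- Round `m` uses the shape `F m`; `hchain` makes the earlier shapes almost
`(F m)⁻¹`-invariant, as `IsCastle.exists_extend` needs. -/
theorem exists_castle_of_chain [Countable G] [HasCountableSeparatingOn X MeasurableSet Set.univ]
    [IsProbabilityMeasure μ] (hα : α.EssFree) {F : ℕ → Finset G} (hF : ∀ m, (F m).Nonempty)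
    {ε : ℝ} (hε0 : 0 ≤ ε) (hε : ε ≤ 1 / 2) (N : ℕ)
    (hchain : ∀ r m, r < m → m < N →
      ((((F m)⁻¹ * F r) \ F r).card : ℝ) ≤ ε * (F r).card) :
    ∃ (ι : Type u) (_ : Countable ι) (A : ι → Set X) (S : ι → Finset G),
      α.IsCastle A S ∧
      (∀ i, (A i).Nonempty →
        ∃ r < N, S i ⊆ F r ∧ ((F r \ S i).card : ℝ) ≤ ε * (F r).card) ∧
      μ.real (α.castle A S)ᶜ ≤ (1 - ε) ^ N + 4 * ε := by
  induction N with
  | zero =>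
    refine ⟨PEmpty, inferInstance, PEmpty.elim, PEmpty.elim,
      ⟨fun i => i.elim, fun i => i.elim⟩, fun i => i.elim, ?_⟩
    simp [castle]
    linarith
  | succ N ih =>
    obtain ⟨ι, _, A, S, h, hshape, hμ⟩ :=
      ih fun r m hrm hmN => hchain r m hrm (hmN.trans N.lt_succ_self)
    have hc (i : ι) (hi : (A i).Nonempty) :
        ((((F N)⁻¹ * S i) \ S i).card : ℝ) ≤ 4 * ε * (S i).card := by
      obtain ⟨r, hr, hSF, hcard⟩ := hshape i hi
      exact card_mul_sdiff_le_of_subset hSF hcard (hchain r N hr N.lt_succ_self) hε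
    obtain ⟨A', S', h', hshape', hμ'⟩ := h.exists_extend hα (hF N) hε0 (by linarith) hc
    refine ⟨ι ⊕ (ℕ × Finset G), inferInstance, _, _, h', ?_, ?_⟩
    · rintro (i | i) hi
      · obtain ⟨r, hr, hri⟩ := hshape i hi
        exact ⟨r, hr.trans N.lt_succ_self, hri⟩
      · exact ⟨N, N.lt_succ_self, hshape' i hi⟩
    · have hreal := ENNReal.toReal_mono (by finiteness) hμ'
      rw [ENNReal.toReal_add (by finiteness) (by finiteness), ENNReal.toReal_add (by finiteness)
        (by finiteness), ENNReal.toReal_mul, ENNReal.toReal_ofReal hε0,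
        ENNReal.toReal_ofReal (by positivity)] at hreal
      simp only [← measureReal_def] at hreal
      rw [pow_succ]
      nlinarith [mul_le_mul_of_nonneg_left hμ (by linarith : (0 : ℝ) ≤ 1 - ε)]

/-- The Ornstein–Weiss Rohlin lemma. -/
theorem exists_castle_of_isFolnerSeq [Countable G]
    [HasCountableSeparatingOn X MeasurableSet Set.univ] [IsProbabilityMeasure μ]
    (hα : α.EssFree) {Fs : ℕ → Finset G} (hFs : IsFolnerSeq Fs) (K : Finset G) {δ : ℝ}
    (hδ0 : 0 < δ) (hδ : δ ≤ 1 / 2) :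
    ∃ (ι : Type u) (_ : Countable ι) (A : ι → Set X) (S : ι → Finset G),
      α.IsCastle A S ∧
      (∀ i, (A i).Nonempty → (((K * S i) \ S i).card : ℝ) ≤ 4 * δ * (S i).card) ∧
      1 - 5 * δ < μ.real (α.castle A S) := by
  obtain ⟨N, hN⟩ := exists_pow_lt_of_lt_one hδ0 (by linarith : 1 - δ < 1)
  obtain ⟨F, hFne, hFK, hchain⟩ := hFs.exists_chain K hδ0 N
  obtain ⟨ι, _, A, S, h, hshape, hμ⟩ := exists_castle_of_chain hα hFne hδ0.le hδ N hchain
  refine ⟨ι, inferInstance, A, S, h, fun i hi => ?_, ?_⟩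
  · obtain ⟨r, -, hSF, hcard⟩ := hshape i hi
    exact card_mul_sdiff_le_of_subset hSF hcard (hFK r) hδ
  · rw [probReal_compl_eq_one_sub h.measurableSet_castle] at hμ
    linarith

/-- `B` is the union of the levels `c • A i` for the tiles `T c` inside `S i`. -/
theorem IsCastle.exists_tower_of_tiling [Countable ι] (h : α.IsCastle A S) {T : Finset G}
    {C : Set G} (hinj : ((T : Set G) ×ˢ C).InjOn (fun p => p.1 * p.2))
    (hcover : ∀ g, ∃ t ∈ T, ∃ c ∈ C, t * c = g) {c : ℝ}
    (hc : ∀ i, (A i).Nonempty →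
      (T.card : ℝ) * ((T * T⁻¹ * S i) \ S i).card ≤ c * (S i).card) :
    ∃ B : Set X, MeasurableSet B ∧ (T : Set G).PairwiseDisjoint (fun t => α.act t '' B) ∧
      ENNReal.ofReal (1 - c) * μ (α.castle A S) ≤ μ (α.tower B T) := by
  choose Cs hCsC hCsS hcard using fun i => exists_finset_card_le_of_tiling hinj hcover (S i)
  have hTCs : α.IsCastle A (fun i => T * Cs i) := h.mono h.measurableSet (fun _ => subset_rfl) hCsS
  refine ⟨α.castle A Cs,
    MeasurableSet.iUnion fun i => α.measurableSet_tower (h.measurableSet i) _,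
    fun t ht t' ht' htt' => Set.disjoint_left.2 fun x hx hx' => ?_, ?_⟩
  · obtain ⟨i, d, hd, hxi⟩ := mem_image_act_castle.1 hx
    obtain ⟨j, d', hd', hxj⟩ := mem_image_act_castle.1 hx'
    refine Set.disjoint_left.1 (h.disjoint (hCsS i (Finset.mul_mem_mul ht hd))
      (hCsS j (Finset.mul_mem_mul ht' hd')) fun hij => htt' ?_) hxi hxj
    obtain ⟨rfl, hmul⟩ := Prod.mk.inj hij
    exact (Prod.mk.inj (hinj (x₁ := (t, d)) (x₂ := (t', d')) ⟨ht, hCsC i hd⟩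
      ⟨ht', hCsC i hd'⟩ hmul)).1
  · rw [tower_castle, hTCs.measure_castle, h.measure_castle, ← ENNReal.tsum_mul_left]
    refine ENNReal.tsum_le_tsum fun i => ?_
    rcases (A i).eq_empty_or_nonempty with hA | hA
    · simp [hA]
    · rw [← mul_assoc]
      refine mul_le_mul_left (ofReal_mul_le_natCast ?_) _
      have := hc i hA
      have : ((S i).card : ℝ) ≤ (T * Cs i).card + T.card * ((T * T⁻¹ * S i) \ S i).card := by
        exact_mod_cast hcard i
      linarith

end PMP

/-- Rohlin lemma for tiles, Ornstein–Weiss. If `G` is a countable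
amenable group, `T` a tile for `G`, and `G ↷ (X, μ)` an essentially free p.m.p.
action on a standard probability space, then for every `ε > 0` there is a Borel set
`B` with `{tB}_{t ∈ T}` pairwise disjoint and `μ(⋃_{t ∈ T} tB) > 1 - ε`. -/
theorem rohlin_lemma_for_tiles
    {G : Type*} [Group G] [Countable G]
    (hamen : ∃ Fseq : ℕ → Finset G, IsFolnerSeq Fseq)
    (T : Finset G) (hT : IsTile T)
    {X : Type*} [MeasurableSpace X] [StandardBorelSpace X]
    (μ : Measure X) [IsProbabilityMeasure μ]
    (α : PMP G X μ) (hα : α.EssFree)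
    (ε : ℝ) (hε : 0 < ε) :
    ∃ B : Set X, MeasurableSet B ∧
      ((T : Set G).Pairwise fun s t => Disjoint (α.act s '' B) (α.act t '' B)) ∧
      μ (⋃ t ∈ T, α.act t '' B) > 1 - ENNReal.ofReal ε := by
  obtain ⟨Fs, hFs⟩ := hamen
  obtain ⟨C, hinj, hcover⟩ := hT.exists_injOn_mul
  set ε' := min ε 1
  have hε' : 0 < ε' := lt_min hε one_pos
  set δ := ε' / (10 * (T.card + 1))
  have hδ : δ * (10 * (T.card + 1)) = ε' := div_mul_cancel₀ _ (by positivity)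
  have hδ0 : 0 < δ := by positivity
  obtain ⟨ι, _, A, S, h, hinv, hμ⟩ :=
    PMP.exists_castle_of_isFolnerSeq hα hFs (T * T⁻¹) hδ0 (by nlinarith [min_le_right ε 1])
  obtain ⟨B, hB, hdisj, hle⟩ := h.exists_tower_of_tiling hinj hcover (c := 4 * δ * T.card)
    fun i hi => by nlinarith [hinv i hi, T.card.cast_nonneg (α := ℝ)]
  have hc : 4 * δ * T.card + 5 * δ < ε' := by nlinarith
  refine ⟨B, hB, hdisj, lt_of_lt_of_le ?_ hle⟩
  rw [← ofReal_measureReal, ← ENNReal.ofReal_mul (by linarith [min_le_right ε 1])]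
  calc 1 - ENNReal.ofReal ε ≤ 1 - ENNReal.ofReal ε' :=
        tsub_le_tsub_left (ENNReal.ofReal_le_ofReal (min_le_left _ _)) 1
    _ = ENNReal.ofReal (1 - ε') := by rw [ENNReal.ofReal_sub _ hε'.le, ENNReal.ofReal_one]
    _ < ENNReal.ofReal ((1 - 4 * δ * T.card) * μ.real (α.castle A S)) := by
        rw [ENNReal.ofReal_lt_ofReal_iff_of_nonneg (by linarith [min_le_right ε 1])]
        nlinarith [mul_le_mul_of_nonneg_left hμ.le (by linarith [min_le_right ε 1] :
          0 ≤ 1 - 4 * δ * T.card), (by positivity : 0 ≤ 4 * δ * T.card)]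
end

section
/- Every countable abelian group G is monotilable: there exists a Følner sequence (F_n) for G such that each F_n is a tile for G. -/
open MeasureTheory Filter
open scoped symmDiff Classical

section Helpers
variable {G : Type*} [CommGroup G]

/-- `T` tiles the subgroup `H`. -/
def TilesSub (T : Finset G) (H : Subgroup G) : Prop :=
  (T : Set G) ⊆ (H : Set G) ∧
  ∃ C : Set G, C ⊆ (H : Set G) ∧
    (C.Pairwise fun c d => Disjoint ((fun t => t * c) '' (T : Set G)) ((fun t => t * d) '' (T : Set G))) ∧
    (⋃ c ∈ C, (fun t => t * c) '' (T : Set G)) = (H : Set G)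

lemma TilesSub.isTile {T : Finset G} {H : Subgroup G} (h : TilesSub T H) : IsTile T := by
  obtain ⟨hTH, C, hCH, hdisj, hunion⟩ := h
  refine ⟨{x | ∃ c ∈ C, ∃ q : G ⧸ H, x = c * q.out}, ?_, ?_⟩
  · rintro x ⟨c, hc, q, rfl⟩ y ⟨c', hc', q', rfl⟩ hne
    rw [Set.disjoint_left]
    rintro z ⟨t, ht, rfl⟩ ⟨t', ht', hz⟩
    have hz' : t' * c' * q'.out = t * c * q.out := by
      have h0 : t' * (c' * q'.out) = t * (c * q.out) := hz
      simpa [mul_assoc] using h0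
    have e1 : (QuotientGroup.mk (t * c * q.out) : G ⧸ H) = QuotientGroup.mk q.out := by
      have h1 : t * c * q.out = q.out * (t * c) := mul_comm _ _
      rw [h1, QuotientGroup.mk_mul_of_mem _ (H.mul_mem (hTH ht) (hCH hc))]
    have e2 : (QuotientGroup.mk (t' * c' * q'.out) : G ⧸ H) = QuotientGroup.mk q'.out := by
      have h1 : t' * c' * q'.out = q'.out * (t' * c') := mul_comm _ _
      rw [h1, QuotientGroup.mk_mul_of_mem _ (H.mul_mem (hTH ht') (hCH hc'))]
    have hq : q = q' := by
      have : (QuotientGroup.mk q.out : G ⧸ H) = QuotientGroup.mk q'.out := by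
        rw [← e1, ← e2, hz']
      rw [← QuotientGroup.out_eq' q, ← QuotientGroup.out_eq' q']
      exact this
    subst hq
    have htc : t' * c' = t * c := mul_right_cancel hz'
    have hcc : c = c' := by
      by_contra hne'
      have hd : Disjoint ((fun t => t * c) '' (T : Set G)) ((fun t => t * c') '' (T : Set G)) :=
        hdisj hc hc' hne'
      exact (Set.disjoint_left.1 hd) ⟨t, ht, rfl⟩ ⟨t', ht', htc⟩
    exact hne (by rw [hcc])
  · apply Set.eq_univ_of_forall
    intro x
    set q : G ⧸ H := QuotientGroup.mk x with hqdef
    have hx : x * (q.out)⁻¹ ∈ H := by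
      have h1 : (QuotientGroup.mk x : G ⧸ H) = QuotientGroup.mk q.out := by
        rw [QuotientGroup.out_eq']
      rw [QuotientGroup.eq] at h1
      have h2 := H.inv_mem h1
      simpa [mul_comm] using h2
    have hx2 : (x * (q.out)⁻¹) ∈ ⋃ c ∈ C, (fun t => t * c) '' (T : Set G) := by
      rw [hunion]; exact hx
    obtain ⟨c, hc, hmem⟩ := Set.mem_iUnion₂.1 hx2
    obtain ⟨t, ht, heq⟩ := hmem
    refine Set.mem_iUnion₂.2 ⟨c * q.out, ⟨c, hc, q, rfl⟩, t, ht, ?_⟩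
    show t * (c * q.out) = x
    have heq' : t * c = x * (q.out)⁻¹ := heq
    rw [← mul_assoc, heq']
    group

lemma symmDiff_biUnion_subset {α β : Type*} [DecidableEq β] (J : Finset α) (A B : α → Finset β) :
    (J.biUnion A) ∆ (J.biUnion B) ⊆ J.biUnion (fun j => A j ∆ B j) := by
  intro x hx
  rw [Finset.mem_symmDiff] at hx
  rcases hx with ⟨h1, h2⟩ | ⟨h1, h2⟩
  · obtain ⟨j, hj, hxj⟩ := Finset.mem_biUnion.1 h1
    exact Finset.mem_biUnion.2 ⟨j, hj, Finset.mem_symmDiff.2 (Or.inl ⟨hxj,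
      fun hb => h2 (Finset.mem_biUnion.2 ⟨j, hj, hb⟩)⟩)⟩
  · obtain ⟨j, hj, hxj⟩ := Finset.mem_biUnion.1 h1
    exact Finset.mem_biUnion.2 ⟨j, hj, Finset.mem_symmDiff.2 (Or.inr ⟨hxj,
      fun hb => h2 (Finset.mem_biUnion.2 ⟨j, hj, hb⟩)⟩)⟩

lemma card_symmDiff_biUnion_le {α β : Type*} [DecidableEq β] (J : Finset α) (A B : α → Finset β) :
    ((J.biUnion A) ∆ (J.biUnion B)).card ≤ ∑ j ∈ J, ((A j ∆ B j).card) :=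
  le_trans (Finset.card_le_card (symmDiff_biUnion_subset J A B)) (Finset.card_biUnion_le)

lemma card_symmDiff_image_mul_right (A B : Finset G) (x : G) :
    ((A.image (· * x)) ∆ (B.image (· * x))).card = (A ∆ B).card := by
  rw [← Finset.image_symmDiff _ _ (mul_left_injective x)]
  exact Finset.card_image_of_injective _ (mul_left_injective x)

end Helpers

section Main0
variable {G : Type*} [CommGroup G]
/-- `H` admits arbitrarily invariant tiles. -/
def Good (H : Subgroup G) : Prop :=
  ∀ S : Finset G, (S : Set G) ⊆ (H : Set G) → ∀ ε : ℝ, 0 < ε →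
    ∃ T : Finset G, T.Nonempty ∧ TilesSub T H ∧
      ∀ s ∈ S, (((T ∆ T.image (fun t => s * t)).card : ℝ)) < ε * T.card
end Main0

section Step
variable {G : Type*} [CommGroup G]

lemma mul_zpow_shuffle (g n t : G) (a b : ℤ) :
    (n * g ^ a) * (t * g ^ b) = (n * t) * g ^ (a + b) := by
  rw [mul_mul_mul_comm, ← zpow_add]

lemma mul_zpow_shuffle' (g n t : G) (a b d e : ℤ) (h : a + b = d + e) :
    (n * g ^ a) * (t * g ^ b) = ((n * g ^ d) * t) * g ^ e := by
  calc (n * g ^ a) * (t * g ^ b) = (n * t) * g ^ (a + b) := mul_zpow_shuffle g n t a b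
    _ = (n * t) * g ^ (d + e) := by rw [h]
    _ = (n * g ^ d) * (t * g ^ e) := (mul_zpow_shuffle g n t d e).symm
    _ = ((n * g ^ d) * t) * g ^ e := (mul_assoc _ _ _).symm

lemma biUnion_extend {α β : Type*} [DecidableEq α] [DecidableEq β] {I J : Finset α}
    (hIJ : I ⊆ J) (f : α → Finset β) :
    J.biUnion (fun j => if j ∈ I then f j else ∅) = I.biUnion f := by
  ext x
  simp only [Finset.mem_biUnion]
  constructor
  · rintro ⟨j, hjJ, hx⟩
    by_cases hj : j ∈ I
    · exact ⟨j, hj, by simpa [hj] using hx⟩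
    · simp [hj] at hx
  · rintro ⟨j, hj, hx⟩
    exact ⟨j, hIJ hj, by simp [hj, hx]⟩

set_option maxHeartbeats 1000000 in
lemma good_sup' (N : Subgroup G) (g : G) (hN : Good N) :
    Good (N ⊔ Subgroup.zpowers g) := by
  intro S hS ε hε
  have hdec : ∀ s ∈ S, ∃ kk : ℤ, s * (g ^ kk)⁻¹ ∈ N := by
    intro s hs
    obtain ⟨y, hy, z, hz, hyz⟩ := Subgroup.mem_sup.1 (hS hs)
    obtain ⟨kk, hkz⟩ := Subgroup.mem_zpowers_iff.1 hz
    exact ⟨kk, by rw [← hyz, ← hkz, mul_inv_cancel_right]; exact hy⟩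
  choose! k hk using hdec
  by_cases hper : ∃ j : ℤ, j ≠ 0 ∧ g ^ j ∈ N
  · -- FINITE ORDER CASE
    have hexm : ∃ m : ℕ, 0 < m ∧ g ^ (m : ℤ) ∈ N := by
      obtain ⟨j, hj0, hjN⟩ := hper
      rcases lt_or_gt_of_ne hj0 with h | h
      · refine ⟨(-j).toNat, by omega, ?_⟩
        have hj' : (((-j).toNat : ℤ)) = -j := Int.toNat_of_nonneg (by omega)
        rw [hj', zpow_neg]
        exact N.inv_mem hjN
      · refine ⟨j.toNat, by omega, ?_⟩
        have hj' : ((j.toNat : ℤ)) = j := Int.toNat_of_nonneg (by omega)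
        rw [hj']; exact hjN
    set m := Nat.find hexm with hmdef
    obtain ⟨hmpos, hgm⟩ := Nat.find_spec hexm
    have hmpos' : 0 < m := hmpos
    have hm' : (0:ℤ) < (m:ℤ) := by exact_mod_cast hmpos'
    have hmin : ∀ i : ℕ, 0 < i → i < m → g ^ (i : ℤ) ∉ N := by
      intro i h1 h2 hmem
      exact Nat.find_min hexm h2 ⟨h1, hmem⟩
    have hdvd : ∀ j : ℤ, g ^ j ∈ N ↔ (m:ℤ) ∣ j := by
      intro j
      constructor
      · intro hj
        have hr0 : 0 ≤ j % m := Int.emod_nonneg j (by omega)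
        have hrm : j % m < m := Int.emod_lt_of_pos j hm'
        have hgr : g ^ (j % m) ∈ N := by
          have hmdvd : g ^ ((m:ℤ) * (j / m)) ∈ N := by
            rw [zpow_mul]; exact Subgroup.zpow_mem N hgm _
          have hjr : j % m = j - (m:ℤ) * (j / m) := by
            have := Int.emod_add_mul_ediv j (m:ℤ); linarith
          rw [hjr, zpow_sub]
          exact N.mul_mem hj (N.inv_mem hmdvd)
        by_contra hnd
        have hne0 : j % m ≠ 0 := fun h0 => hnd (Int.dvd_of_emod_eq_zero h0)
        have := hmin (j % m).toNat (by omega) (by omega)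
        rw [Int.toNat_of_nonneg hr0] at this
        exact this hgr
      · rintro ⟨q, rfl⟩
        rw [zpow_mul]; exact Subgroup.zpow_mem N hgm _
    set r : G → ℤ := fun s => k s % m with hrdef
    set n' : G → G := fun s => s * (g ^ (r s))⁻¹ with hn'def
    have hr0 : ∀ s, 0 ≤ r s := fun s => Int.emod_nonneg _ (by omega)
    have hrm : ∀ s, r s < m := fun s => Int.emod_lt_of_pos _ hm'
    have hn'mem : ∀ s ∈ S, n' s ∈ N := by
      intro s hs
      have h1 : n' s = (s * (g ^ k s)⁻¹) * g ^ (k s - r s) := by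
        show s * (g ^ (r s))⁻¹ = (s * (g ^ k s)⁻¹) * g ^ (k s - r s)
        rw [zpow_sub]; group
      rw [h1]
      exact N.mul_mem (hk s hs) ((hdvd _).2 (Int.dvd_self_sub_of_emod_eq rfl))
    set S₀ : Finset G := S.image n' ∪ S.image (fun s => n' s * g ^ (m:ℤ)) with hS₀def
    have hS₀N : (S₀ : Set G) ⊆ (N : Set G) := by
      intro x hx
      simp only [hS₀def, Finset.coe_union, Set.mem_union, Finset.coe_image,
        Set.mem_image, Finset.mem_coe] at hx
      rcases hx with ⟨s, hs, rfl⟩ | ⟨s, hs, rfl⟩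
      · exact hn'mem s hs
      · exact N.mul_mem (hn'mem s hs) hgm
    obtain ⟨T₀, hT₀ne, ⟨hT₀N, C₀, hC₀N, hC₀disj, hC₀union⟩, hT₀inv⟩ := hN S₀ hS₀N ε hε
    set T : Finset G := (Finset.Ico (0:ℤ) (m:ℤ)).biUnion (fun j => T₀.image (· * g ^ j)) with hTdef
    have halign : ∀ j j' : ℤ, 0 ≤ j → j < m → 0 ≤ j' → j' < m → g ^ (j - j') ∈ N → j = j' := by
      intro j j' h1 h2 h3 h4 hmem
      have hd := (hdvd _).1 hmem
      have := Int.eq_zero_of_abs_lt_dvd hd (by rw [abs_lt]; omega)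
      omega
    have hdisjslices : ∀ j ∈ Finset.Ico (0:ℤ) (m:ℤ), ∀ j' ∈ Finset.Ico (0:ℤ) (m:ℤ), j ≠ j' →
        Disjoint (T₀.image (· * g ^ j)) (T₀.image (· * g ^ j')) := by
      intro j hj j' hj' hne
      rw [Finset.mem_Ico] at hj hj'
      rw [Finset.disjoint_left]
      intro x hx hx'
      obtain ⟨t, ht, rfl⟩ := Finset.mem_image.1 hx
      obtain ⟨t', ht', heq⟩ := Finset.mem_image.1 hx'
      apply hne
      apply halign j j' hj.1 hj.2 hj'.1 hj'.2
      have h4 : t' = t * g ^ j * (g ^ j')⁻¹ := by rw [← heq]; group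
      have h3 : g ^ (j - j') = t⁻¹ * t' := by rw [h4, zpow_sub]; group
      rw [h3]
      exact N.mul_mem (N.inv_mem (hT₀N ht)) (hT₀N ht')
    have hcardT : T.card = m * T₀.card := by
      rw [hTdef, Finset.card_biUnion hdisjslices]
      rw [Finset.sum_congr rfl (fun j _ => Finset.card_image_of_injective T₀ (mul_left_injective (g ^ j)))]
      rw [Finset.sum_const, Int.card_Ico, smul_eq_mul]
      simp
    have hTne : T.Nonempty := by
      obtain ⟨t, ht⟩ := hT₀ne
      exact ⟨t * g ^ (0:ℤ), Finset.mem_biUnion.2 ⟨0, Finset.mem_Ico.2 ⟨le_refl _, hm'⟩,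
        Finset.mem_image.2 ⟨t, ht, rfl⟩⟩⟩
    have hTH : (T : Set G) ⊆ ((N ⊔ Subgroup.zpowers g : Subgroup G) : Set G) := by
      intro x hx
      obtain ⟨j, _, hx2⟩ := Finset.mem_biUnion.1 (Finset.mem_coe.1 hx)
      obtain ⟨t, ht, rfl⟩ := Finset.mem_image.1 hx2
      exact Subgroup.mul_mem _ (Subgroup.mem_sup_left (hT₀N ht))
        (Subgroup.mem_sup_right (Subgroup.zpow_mem _ (Subgroup.mem_zpowers g) j))
    have hmemT : ∀ (t : G) (j : ℤ), t ∈ T₀ → 0 ≤ j → j < m → t * g ^ j ∈ T := by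
      intro t j ht h1 h2
      exact Finset.mem_biUnion.2 ⟨j, Finset.mem_Ico.2 ⟨h1, h2⟩, Finset.mem_image.2 ⟨t, ht, rfl⟩⟩
    have hTmem : ∀ x ∈ T, ∃ j : ℤ, 0 ≤ j ∧ j < m ∧ ∃ t ∈ T₀, t * g ^ j = x := by
      intro x hx
      obtain ⟨j, hj, hx2⟩ := Finset.mem_biUnion.1 hx
      obtain ⟨t, ht, rfl⟩ := Finset.mem_image.1 hx2
      rw [Finset.mem_Ico] at hj
      exact ⟨j, hj.1, hj.2, t, ht, rfl⟩
    refine ⟨T, hTne, ⟨hTH, C₀, fun c hc => Subgroup.mem_sup_left (hC₀N hc), ?_, ?_⟩, ?_⟩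
    · -- pairwise disjointness of the tiling of H
      intro c hc c' hc' hne
      rw [Set.disjoint_left]
      rintro x ⟨u, hu, rfl⟩ ⟨u', hu', heq⟩
      obtain ⟨j, hj1, hj2, t, ht, rfl⟩ := hTmem u (Finset.mem_coe.1 hu)
      obtain ⟨j', hj1', hj2', t', ht', rfl⟩ := hTmem u' (Finset.mem_coe.1 hu')
      -- heq : (t' * g ^ j') * c' = (t * g ^ j) * c
      have heq2 : (t' * c') * g ^ j' = (t * c) * g ^ j := by
        have hb : (t' * g ^ j') * c' = (t * g ^ j) * c := heq
        rw [mul_right_comm t' (g ^ j') c', mul_right_comm t (g ^ j) c] at hb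
        exact hb
      have hjj : j = j' := by
        apply halign j j' hj1 hj2 hj1' hj2'
        have h4 : g ^ (j - j') = (t * c)⁻¹ * (t' * c') := by
          have h5 : t * c = (t' * c') * g ^ j' * (g ^ j)⁻¹ := by rw [heq2]; group
          rw [h5, zpow_sub]; group
        rw [h4]
        exact N.mul_mem (N.inv_mem (N.mul_mem (hT₀N ht) (hC₀N hc)))
          (N.mul_mem (hT₀N ht') (hC₀N hc'))
      subst hjj
      have htc : t' * c' = t * c := mul_right_cancel heq2
      have hcc : c = c' := by
        by_contra hne'
        have hd : Disjoint ((fun t => t * c) '' (T₀ : Set G)) ((fun t => t * c') '' (T₀ : Set G)) :=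
          hC₀disj hc hc' hne'
        exact (Set.disjoint_left.1 hd) ⟨t, ht, rfl⟩ ⟨t', ht', htc⟩
      exact hne hcc
    · -- union over C₀ of T-translates = H
      apply Set.Subset.antisymm
      · rintro x hx
        obtain ⟨c, hc, t, ht, rfl⟩ := Set.mem_iUnion₂.1 hx
        exact Subgroup.mul_mem _ (hTH ht) (Subgroup.mem_sup_left (hC₀N hc))
      · intro h hh
        obtain ⟨nn, hnn, z, hz, rfl⟩ := Subgroup.mem_sup.1 hh
        obtain ⟨kh, rfl⟩ := Subgroup.mem_zpowers_iff.1 hz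
        set j := kh % m with hjdef
        have hnn2 : nn * g ^ (kh - j) ∈ N :=
          N.mul_mem hnn ((hdvd _).2 (Int.dvd_self_sub_of_emod_eq rfl))
        have hmem2 : nn * g ^ (kh - j) ∈ ⋃ c ∈ C₀, (fun t => t * c) '' (T₀ : Set G) := by
          rw [hC₀union]; exact hnn2
        obtain ⟨c, hc, t, ht, heq⟩ := Set.mem_iUnion₂.1 hmem2
        have heq' : t * c = nn * g ^ (kh - j) := heq
        refine Set.mem_iUnion₂.2 ⟨c, hc, t * g ^ j, ?_, ?_⟩
        · exact Finset.mem_coe.2 (hmemT t j ht (Int.emod_nonneg _ (ne_of_gt hm')) (Int.emod_lt_of_pos _ hm'))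
        · show (t * g ^ j) * c = nn * g ^ kh
          rw [mul_right_comm, heq', mul_assoc, ← zpow_add]
          congr 1
          ring
    · -- invariance
      intro s hs
      have hr0s : 0 ≤ r s := hr0 s
      have hrms : r s < (m:ℤ) := hrm s
      have hsn : s = n' s * g ^ (r s) := (inv_mul_cancel_right s (g ^ (r s))).symm
      set c_ : ℤ → G := fun j => n' s * g ^ (if j < r s then (m:ℤ) else 0) with hcdef
      have hc_mem : ∀ j : ℤ, c_ j ∈ S₀ := by
        intro j
        show n' s * g ^ (if j < r s then (m:ℤ) else 0) ∈ S₀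
        split
        · exact Finset.mem_union_right _ (Finset.mem_image.2 ⟨s, hs, rfl⟩)
        · rw [zpow_zero, mul_one]
          exact Finset.mem_union_left _ (Finset.mem_image.2 ⟨s, hs, rfl⟩)
      have himg : T.image (fun t => s * t) =
          (Finset.Ico (0:ℤ) (m:ℤ)).biUnion (fun j => T₀.image (fun t => (c_ j * t) * g ^ j)) := by
        ext x
        constructor
        · intro hx
          obtain ⟨u, hu, rfl⟩ := Finset.mem_image.1 hx
          obtain ⟨j, hj1, hj2, t, ht, rfl⟩ := hTmem u hu
          rcases lt_or_ge (j + r s) (m:ℤ) with hcase | hcase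
          · refine Finset.mem_biUnion.2 ⟨j + r s, Finset.mem_Ico.2 ⟨by omega, hcase⟩,
              Finset.mem_image.2 ⟨t, ht, ?_⟩⟩
            show (c_ (j + r s) * t) * g ^ (j + r s) = s * (t * g ^ j)
            have hce : c_ (j + r s) = n' s * g ^ (0:ℤ) := by
              show n' s * g ^ (if j + r s < r s then (m:ℤ) else 0) = n' s * g ^ (0:ℤ)
              rw [if_neg (by omega)]
            have key := (mul_zpow_shuffle' g (n' s) t (r s) j 0 (j + r s) (by omega)).symm
            rw [← hsn, ← hce] at key
            exact key
          · refine Finset.mem_biUnion.2 ⟨j + r s - m, Finset.mem_Ico.2 ⟨by omega, by omega⟩,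
              Finset.mem_image.2 ⟨t, ht, ?_⟩⟩
            show (c_ (j + r s - m) * t) * g ^ (j + r s - m) = s * (t * g ^ j)
            have hce : c_ (j + r s - m) = n' s * g ^ (m:ℤ) := by
              show n' s * g ^ (if j + r s - m < r s then (m:ℤ) else 0) = n' s * g ^ (m:ℤ)
              rw [if_pos (by omega)]
            have key := (mul_zpow_shuffle' g (n' s) t (r s) j (m:ℤ) (j + r s - m) (by omega)).symm
            rw [← hsn, ← hce] at key
            exact key
        · intro hx
          obtain ⟨j, hj, hx2⟩ := Finset.mem_biUnion.1 hx
          obtain ⟨t, ht, rfl⟩ := Finset.mem_image.1 hx2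
          rw [Finset.mem_Ico] at hj
          rcases lt_or_ge j (r s) with hcase | hcase
          · refine Finset.mem_image.2 ⟨t * g ^ (j + m - r s), hmemT t _ ht (by omega) (by omega), ?_⟩
            show s * (t * g ^ (j + m - r s)) = (c_ j * t) * g ^ j
            have hce : c_ j = n' s * g ^ (m:ℤ) := by
              show n' s * g ^ (if j < r s then (m:ℤ) else 0) = n' s * g ^ (m:ℤ)
              rw [if_pos hcase]
            have key := mul_zpow_shuffle' g (n' s) t (r s) (j + m - r s) (m:ℤ) j (by omega)
            rw [← hsn, ← hce] at key
            exact key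
          · refine Finset.mem_image.2 ⟨t * g ^ (j - r s), hmemT t _ ht (by omega) (by omega), ?_⟩
            show s * (t * g ^ (j - r s)) = (c_ j * t) * g ^ j
            have hce : c_ j = n' s * g ^ (0:ℤ) := by
              show n' s * g ^ (if j < r s then (m:ℤ) else 0) = n' s * g ^ (0:ℤ)
              rw [if_neg (by omega)]
            have key := mul_zpow_shuffle' g (n' s) t (r s) (j - r s) 0 j (by omega)
            rw [← hsn, ← hce] at key
            exact key
      have h1 : (T ∆ T.image (fun t => s * t)).card ≤
          ∑ j ∈ Finset.Ico (0:ℤ) (m:ℤ),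
            ((T₀.image (· * g ^ j)) ∆ (T₀.image (fun t => (c_ j * t) * g ^ j))).card := by
        conv_lhs => rw [hTdef, himg]
        exact card_symmDiff_biUnion_le _ _ _
      have h2 : ∀ j ∈ Finset.Ico (0:ℤ) (m:ℤ),
          (((T₀.image (· * g ^ j)) ∆ (T₀.image (fun t => (c_ j * t) * g ^ j))).card : ℝ)
            < ε * T₀.card := by
        intro j _
        have he : T₀.image (fun t => (c_ j * t) * g ^ j)
            = (T₀.image (fun t => c_ j * t)).image (· * g ^ j) := by
          rw [Finset.image_image]; rfl
        rw [he, card_symmDiff_image_mul_right]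
        exact hT₀inv (c_ j) (hc_mem j)
      calc ((T ∆ T.image (fun t => s * t)).card : ℝ)
          ≤ ∑ j ∈ Finset.Ico (0:ℤ) (m:ℤ),
              (((T₀.image (· * g ^ j)) ∆ (T₀.image (fun t => (c_ j * t) * g ^ j))).card : ℝ) := by
            exact_mod_cast h1
        _ < ∑ _j ∈ Finset.Ico (0:ℤ) (m:ℤ), ε * T₀.card :=
            Finset.sum_lt_sum_of_nonempty (Finset.nonempty_Ico.2 hm') h2
        _ = ε * T.card := by
            have hms : ((((m:ℤ) - 0).toNat : ℕ) : ℝ) = (m:ℝ) := by simp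
            rw [Finset.sum_const, Int.card_Ico, nsmul_eq_mul, hms, hcardT]
            push_cast
            ring
  · -- INFINITE ORDER CASE
    have hfree : ∀ j : ℤ, g ^ j ∈ N → j = 0 := by
      push_neg at hper
      intro j hj
      by_contra h0
      exact hper j h0 hj
    set K : ℕ := S.sup fun s => (k s).natAbs with hKdef
    have hK : ∀ s ∈ S, (k s).natAbs ≤ K := fun s hs => Finset.le_sup (f := fun s => (k s).natAbs) hs
    set S₀ : Finset G := S.image (fun s => s * (g ^ k s)⁻¹) with hS₀def
    have hS₀N : (S₀ : Set G) ⊆ (N : Set G) := by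
      intro x hx
      simp only [hS₀def, Finset.coe_image, Set.mem_image, Finset.mem_coe] at hx
      obtain ⟨s, hs, rfl⟩ := hx
      exact hk s hs
    have hε2 : (0:ℝ) < ε / 2 := by positivity
    obtain ⟨T₀, hT₀ne, ⟨hT₀N, C₀, hC₀N, hC₀disj, hC₀union⟩, hT₀inv⟩ := hN S₀ hS₀N (ε/2) hε2
    set M : ℕ := ⌈((4*K+1 : ℝ))/ε⌉₊ with hMdef
    have hM1 : ((4*K+1 : ℝ))/ε ≤ M := Nat.le_ceil _
    have hMpos : 0 < M := by
      rw [hMdef]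
      apply Nat.ceil_pos.2
      positivity
    have hεM : 4*(K:ℝ)+1 ≤ ε * M := by
      rw [div_le_iff₀ hε] at hM1
      linarith [hM1]
    have hM' : (0:ℤ) < (M:ℤ) := by exact_mod_cast hMpos
    set T : Finset G := (Finset.Ico (0:ℤ) (M:ℤ)).biUnion (fun j => T₀.image (· * g ^ j)) with hTdef
    have halign : ∀ j j' : ℤ, g ^ (j - j') ∈ N → j = j' := by
      intro j j' hmem
      have := hfree _ hmem
      omega
    have hdisjslices : ∀ j ∈ Finset.Ico (0:ℤ) (M:ℤ), ∀ j' ∈ Finset.Ico (0:ℤ) (M:ℤ), j ≠ j' →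
        Disjoint (T₀.image (· * g ^ j)) (T₀.image (· * g ^ j')) := by
      intro j _ j' _ hne
      rw [Finset.disjoint_left]
      intro x hx hx'
      obtain ⟨t, ht, rfl⟩ := Finset.mem_image.1 hx
      obtain ⟨t', ht', heq⟩ := Finset.mem_image.1 hx'
      apply hne
      apply halign j j'
      have h4 : t' = t * g ^ j * (g ^ j')⁻¹ := by rw [← heq]; group
      have h3 : g ^ (j - j') = t⁻¹ * t' := by rw [h4, zpow_sub]; group
      rw [h3]
      exact N.mul_mem (N.inv_mem (hT₀N ht)) (hT₀N ht')
    have hcardT : T.card = M * T₀.card := by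
      rw [hTdef, Finset.card_biUnion hdisjslices]
      rw [Finset.sum_congr rfl (fun j _ => Finset.card_image_of_injective T₀ (mul_left_injective (g ^ j)))]
      rw [Finset.sum_const, Int.card_Ico, smul_eq_mul]
      simp
    have hTne : T.Nonempty := by
      obtain ⟨t, ht⟩ := hT₀ne
      exact ⟨t * g ^ (0:ℤ), Finset.mem_biUnion.2 ⟨0, Finset.mem_Ico.2 ⟨le_refl _, hM'⟩,
        Finset.mem_image.2 ⟨t, ht, rfl⟩⟩⟩
    have hTH : (T : Set G) ⊆ ((N ⊔ Subgroup.zpowers g : Subgroup G) : Set G) := by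
      intro x hx
      obtain ⟨j, _, hx2⟩ := Finset.mem_biUnion.1 (Finset.mem_coe.1 hx)
      obtain ⟨t, ht, rfl⟩ := Finset.mem_image.1 hx2
      exact Subgroup.mul_mem _ (Subgroup.mem_sup_left (hT₀N ht))
        (Subgroup.mem_sup_right (Subgroup.zpow_mem _ (Subgroup.mem_zpowers g) j))
    have hmemT : ∀ (t : G) (j : ℤ), t ∈ T₀ → 0 ≤ j → j < M → t * g ^ j ∈ T := by
      intro t j ht h1 h2
      exact Finset.mem_biUnion.2 ⟨j, Finset.mem_Ico.2 ⟨h1, h2⟩, Finset.mem_image.2 ⟨t, ht, rfl⟩⟩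
    have hTmem : ∀ x ∈ T, ∃ j : ℤ, 0 ≤ j ∧ j < M ∧ ∃ t ∈ T₀, t * g ^ j = x := by
      intro x hx
      obtain ⟨j, hj, hx2⟩ := Finset.mem_biUnion.1 hx
      obtain ⟨t, ht, rfl⟩ := Finset.mem_image.1 hx2
      rw [Finset.mem_Ico] at hj
      exact ⟨j, hj.1, hj.2, t, ht, rfl⟩
    set C : Set G := {x | ∃ c ∈ C₀, ∃ q : ℤ, x = c * g ^ ((M:ℤ) * q)} with hCdef
    refine ⟨T, hTne, ⟨hTH, C, ?_, ?_, ?_⟩, ?_⟩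
    · rintro x ⟨c, hc, q, rfl⟩
      exact Subgroup.mul_mem _ (Subgroup.mem_sup_left (hC₀N hc))
        (Subgroup.mem_sup_right (Subgroup.zpow_mem _ (Subgroup.mem_zpowers g) _))
    · -- pairwise disjoint
      rintro x ⟨c, hc, q, rfl⟩ y ⟨c', hc', q', rfl⟩ hne
      rw [Set.disjoint_left]
      rintro z ⟨u, hu, rfl⟩ ⟨u', hu', heq⟩
      obtain ⟨j, hj1, hj2, t, ht, rfl⟩ := hTmem u (Finset.mem_coe.1 hu)
      obtain ⟨j', hj1', hj2', t', ht', rfl⟩ := hTmem u' (Finset.mem_coe.1 hu')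
      have heq2 : (t' * c') * g ^ (j' + (M:ℤ) * q') = (t * c) * g ^ (j + (M:ℤ) * q) := by
        have hb : (t' * g ^ j') * (c' * g ^ ((M:ℤ) * q')) = (t * g ^ j) * (c * g ^ ((M:ℤ) * q)) := heq
        rw [mul_mul_mul_comm t' (g ^ j') c' (g ^ ((M:ℤ) * q')), ← zpow_add,
          mul_mul_mul_comm t (g ^ j) c (g ^ ((M:ℤ) * q)), ← zpow_add] at hb
        exact hb
      have hjq : j + (M:ℤ) * q = j' + (M:ℤ) * q' := by
        have h5 : t * c = (t' * c') * g ^ (j' + (M:ℤ) * q') * (g ^ (j + (M:ℤ) * q))⁻¹ := by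
          rw [heq2]; group
        have h4 : g ^ ((j' + (M:ℤ) * q') - (j + (M:ℤ) * q)) = (t' * c')⁻¹ * (t * c) := by
          rw [h5, zpow_sub]; group
        refine (halign _ _ ?_).symm
        rw [h4]
        exact N.mul_mem (N.inv_mem (N.mul_mem (hT₀N ht') (hC₀N hc')))
          (N.mul_mem (hT₀N ht) (hC₀N hc))
      have hdj : (M:ℤ) ∣ (j - j') := ⟨q' - q, by linarith [hjq]⟩
      have hjj : j = j' := by
        have := Int.eq_zero_of_abs_lt_dvd hdj (by rw [abs_lt]; omega)
        omega
      subst hjj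
      have hqq : q = q' := by
        have h6 : (M:ℤ) * q = (M:ℤ) * q' := by omega
        exact mul_left_cancel₀ (ne_of_gt hM') h6
      subst hqq
      have htc : t' * c' = t * c := mul_right_cancel heq2
      have hcc : c = c' := by
        by_contra hne'
        have hd : Disjoint ((fun t => t * c) '' (T₀ : Set G)) ((fun t => t * c') '' (T₀ : Set G)) :=
          hC₀disj hc hc' hne'
        exact (Set.disjoint_left.1 hd) ⟨t, ht, rfl⟩ ⟨t', ht', htc⟩
      exact hne (by rw [hcc])
    · -- union = H
      apply Set.Subset.antisymm
      · rintro x hx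
        obtain ⟨c, hcC, t, ht, rfl⟩ := Set.mem_iUnion₂.1 hx
        obtain ⟨c₀, hc₀, q, rfl⟩ := hcC
        exact Subgroup.mul_mem _ (hTH ht)
          (Subgroup.mul_mem _ (Subgroup.mem_sup_left (hC₀N hc₀))
            (Subgroup.mem_sup_right (Subgroup.zpow_mem _ (Subgroup.mem_zpowers g) _)))
      · intro h hh
        obtain ⟨nn, hnn, z, hz, rfl⟩ := Subgroup.mem_sup.1 hh
        obtain ⟨kh, rfl⟩ := Subgroup.mem_zpowers_iff.1 hz
        have hmem2 : nn ∈ ⋃ c ∈ C₀, (fun t => t * c) '' (T₀ : Set G) := by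
          rw [hC₀union]; exact hnn
        obtain ⟨c, hc, t, ht, heq⟩ := Set.mem_iUnion₂.1 hmem2
        have heq' : t * c = nn := heq
        set j : ℤ := kh % M with hjdef
        set q : ℤ := kh / M with hqdef
        have hkh : kh = j + (M:ℤ) * q := by
          have := Int.emod_add_mul_ediv kh (M:ℤ); linarith
        refine Set.mem_iUnion₂.2 ⟨c * g ^ ((M:ℤ) * q), ⟨c, hc, q, rfl⟩, t * g ^ j, ?_, ?_⟩
        · exact Finset.mem_coe.2 (hmemT t j ht (Int.emod_nonneg _ (ne_of_gt hM'))
            (Int.emod_lt_of_pos _ hM'))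
        · show (t * g ^ j) * (c * g ^ ((M:ℤ) * q)) = nn * g ^ kh
          rw [mul_mul_mul_comm, ← zpow_add, heq', hkh]
    · -- invariance
      intro s hs
      set kk : ℤ := k s with hkkdef
      set n : G := s * (g ^ kk)⁻¹ with hndef
      have hnN : n ∈ N := hk s hs
      have hnS₀ : n ∈ S₀ := by
        rw [hS₀def]
        exact Finset.mem_image.2 ⟨s, hs, rfl⟩
      have hsn : s = n * g ^ kk := (inv_mul_cancel_right s (g ^ kk)).symm
      have hkabs : (kk).natAbs ≤ K := hK s hs
      have hkb : -(K:ℤ) ≤ kk ∧ kk ≤ (K:ℤ) := by omega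
      set I1 : Finset ℤ := Finset.Ico (0:ℤ) (M:ℤ) with hI1def
      set I2 : Finset ℤ := Finset.Ico kk ((M:ℤ) + kk) with hI2def
      set J : Finset ℤ := Finset.Ico (-(K:ℤ)) ((M:ℤ) + K) with hJdef
      have hI1J : I1 ⊆ J := by
        intro j hj
        rw [hI1def, Finset.mem_Ico] at hj
        rw [hJdef, Finset.mem_Ico]
        omega
      have hI2J : I2 ⊆ J := by
        intro j hj
        rw [hI2def, Finset.mem_Ico] at hj
        rw [hJdef, Finset.mem_Ico]
        omega
      set A : ℤ → Finset G := fun j => if j ∈ I1 then T₀.image (· * g ^ j) else ∅ with hAdef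
      set B : ℤ → Finset G := fun j => if j ∈ I2 then T₀.image (fun t => (n * t) * g ^ j) else ∅
        with hBdef
      have hTA : T = J.biUnion A := by
        rw [hTdef, hAdef, biUnion_extend hI1J]
      have hsTB : T.image (fun t => s * t) = J.biUnion B := by
        rw [hBdef, biUnion_extend hI2J]
        ext x
        constructor
        · intro hx
          obtain ⟨u, hu, rfl⟩ := Finset.mem_image.1 hx
          obtain ⟨j, hj1, hj2, t, ht, rfl⟩ := hTmem u hu
          refine Finset.mem_biUnion.2 ⟨j + kk, ?_, Finset.mem_image.2 ⟨t, ht, ?_⟩⟩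
          · rw [hI2def, Finset.mem_Ico]; omega
          · show (n * t) * g ^ (j + kk) = s * (t * g ^ j)
            have key := (mul_zpow_shuffle g n t kk j).symm
            rw [← hsn] at key
            conv_lhs => rw [add_comm j kk]
            exact key
        · intro hx
          obtain ⟨j, hj, hx2⟩ := Finset.mem_biUnion.1 hx
          obtain ⟨t, ht, rfl⟩ := Finset.mem_image.1 hx2
          rw [hI2def, Finset.mem_Ico] at hj
          refine Finset.mem_image.2 ⟨t * g ^ (j - kk), hmemT t _ ht (by omega) (by omega), ?_⟩
          show s * (t * g ^ (j - kk)) = (n * t) * g ^ j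
          have key := mul_zpow_shuffle g n t kk (j - kk)
          rw [← hsn] at key
          conv_rhs => rw [show (j:ℤ) = kk + (j - kk) by ring]
          exact key
      set D : Finset ℤ := (I1 \ I2) ∪ (I2 \ I1) with hDdef
      have hpt : ∀ j ∈ J, ((A j ∆ B j).card : ℝ) ≤
          (if j ∈ I1 ∩ I2 then ε/2 * T₀.card else 0) +
          (if j ∈ D then (T₀.card : ℝ) else 0) := by
        intro j _
        by_cases h1 : j ∈ I1 <;> by_cases h2 : j ∈ I2
        · have hA : A j = T₀.image (· * g ^ j) := by rw [hAdef]; simp [h1]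
          have hB : B j = (T₀.image (fun t => n * t)).image (· * g ^ j) := by
            rw [hBdef]; simp only [if_pos h2]
            rw [Finset.image_image]; rfl
          rw [hA, hB, card_symmDiff_image_mul_right]
          rw [if_pos (Finset.mem_inter.2 ⟨h1, h2⟩),
            if_neg (by rw [hDdef]; simp [Finset.mem_sdiff, h1, h2])]
          have := hT₀inv n hnS₀
          linarith [this]
        · have hA : A j = T₀.image (· * g ^ j) := by rw [hAdef]; simp [h1]
          have hB : B j = ∅ := by rw [hBdef]; simp [h2]
          rw [hA, hB, ← Finset.bot_eq_empty, symmDiff_bot]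
          rw [if_neg (by simp [Finset.mem_inter, h2]),
            if_pos (by rw [hDdef]; simp [Finset.mem_sdiff, h1, h2])]
          have hle : ((T₀.image (· * g ^ j)).card : ℝ) ≤ (T₀.card : ℝ) := by
            exact_mod_cast Finset.card_image_le
          linarith
        · have hA : A j = ∅ := by rw [hAdef]; simp [h1]
          have hB : B j = T₀.image (fun t => (n * t) * g ^ j) := by rw [hBdef]; simp [h2]
          rw [hA, hB, ← Finset.bot_eq_empty, bot_symmDiff]
          rw [if_neg (by simp [Finset.mem_inter, h1]),
            if_pos (by rw [hDdef]; simp [Finset.mem_sdiff, h1, h2])]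
          have hle : ((T₀.image (fun t => (n * t) * g ^ j)).card : ℝ) ≤ (T₀.card : ℝ) := by
            exact_mod_cast Finset.card_image_le
          linarith
        · have hA : A j = ∅ := by rw [hAdef]; simp [h1]
          have hB : B j = ∅ := by rw [hBdef]; simp [h2]
          rw [hA, hB]
          have hz : ((((∅ : Finset G) ∆ (∅ : Finset G)).card : ℕ) : ℝ) = 0 := by simp
          rw [hz]
          have hc0 : (0:ℝ) ≤ (T₀.card:ℝ) := Nat.cast_nonneg _
          have h0a : (0:ℝ) ≤ ε/2 * T₀.card := mul_nonneg (by linarith) hc0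
          split_ifs <;> linarith
      have hcard1 : ((J ∩ (I1 ∩ I2)).card : ℝ) ≤ (M : ℝ) := by
        have h1 : (J ∩ (I1 ∩ I2)).card ≤ I1.card := by
          apply Finset.card_le_card
          intro x hx
          exact (Finset.mem_inter.1 (Finset.mem_inter.1 hx).2).1
        have h2 : I1.card = M := by rw [hI1def, Int.card_Ico]; simp
        exact_mod_cast h2 ▸ h1
      have hcard2 : ((J ∩ D).card : ℝ) ≤ 2 * (K : ℝ) := by
        have hsub1 : I1 \ I2 ⊆ Finset.Ico (0:ℤ) kk ∪ Finset.Ico ((M:ℤ)+kk) (M:ℤ) := by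
          intro j hj
          simp only [hI1def, hI2def, Finset.mem_sdiff, Finset.mem_Ico, not_and, not_lt,
            Finset.mem_union] at hj ⊢
          omega
        have hsub2 : I2 \ I1 ⊆ Finset.Ico kk (0:ℤ) ∪ Finset.Ico (M:ℤ) ((M:ℤ)+kk) := by
          intro j hj
          simp only [hI1def, hI2def, Finset.mem_sdiff, Finset.mem_Ico, not_and, not_lt,
            Finset.mem_union] at hj ⊢
          omega
        have hc1 : (I1 \ I2).card ≤ K := by
          calc (I1 \ I2).card ≤ (Finset.Ico (0:ℤ) kk ∪ Finset.Ico ((M:ℤ)+kk) (M:ℤ)).card :=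
                Finset.card_le_card hsub1
            _ ≤ (Finset.Ico (0:ℤ) kk).card + (Finset.Ico ((M:ℤ)+kk) (M:ℤ)).card :=
                Finset.card_union_le _ _
            _ ≤ K := by rw [Int.card_Ico, Int.card_Ico]; omega
        have hc2 : (I2 \ I1).card ≤ K := by
          calc (I2 \ I1).card ≤ (Finset.Ico kk (0:ℤ) ∪ Finset.Ico (M:ℤ) ((M:ℤ)+kk)).card :=
                Finset.card_le_card hsub2
            _ ≤ (Finset.Ico kk (0:ℤ)).card + (Finset.Ico (M:ℤ) ((M:ℤ)+kk)).card :=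
                Finset.card_union_le _ _
            _ ≤ K := by rw [Int.card_Ico, Int.card_Ico]; omega
        have h3 : (J ∩ D).card ≤ 2 * K := by
          calc (J ∩ D).card ≤ D.card := Finset.card_le_card (Finset.inter_subset_right)
            _ ≤ (I1 \ I2).card + (I2 \ I1).card := Finset.card_union_le _ _
            _ ≤ 2 * K := by omega
        exact_mod_cast h3
      have hT₀pos : (1:ℝ) ≤ (T₀.card : ℝ) := by
        exact_mod_cast Finset.card_pos.2 hT₀ne
      have hchain : ((T ∆ T.image (fun t => s * t)).card : ℝ)
          ≤ (M:ℝ) * (ε/2 * T₀.card) + (2 * (K:ℝ)) * T₀.card := by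
        have h1 : (T ∆ T.image (fun t => s * t)).card ≤ ∑ j ∈ J, (A j ∆ B j).card := by
          rw [hsTB, hTA]
          exact card_symmDiff_biUnion_le _ _ _
        calc ((T ∆ T.image (fun t => s * t)).card : ℝ)
            ≤ ∑ j ∈ J, ((A j ∆ B j).card : ℝ) := by exact_mod_cast h1
          _ ≤ ∑ j ∈ J, ((if j ∈ I1 ∩ I2 then ε/2 * T₀.card else 0) +
                (if j ∈ D then (T₀.card : ℝ) else 0)) := Finset.sum_le_sum hpt
          _ = (∑ j ∈ J, (if j ∈ I1 ∩ I2 then ε/2 * (T₀.card:ℝ) else 0)) +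
                ∑ j ∈ J, (if j ∈ D then (T₀.card : ℝ) else 0) := Finset.sum_add_distrib
          _ = ((J ∩ (I1 ∩ I2)).card : ℝ) * (ε/2 * T₀.card) +
                ((J ∩ D).card : ℝ) * (T₀.card : ℝ) := by
              rw [Finset.sum_ite_mem, Finset.sum_ite_mem, Finset.sum_const, Finset.sum_const,
                nsmul_eq_mul, nsmul_eq_mul]
          _ ≤ (M:ℝ) * (ε/2 * T₀.card) + (2 * (K:ℝ)) * T₀.card := by
              have h0b : (0:ℝ) ≤ (T₀.card : ℝ) := Nat.cast_nonneg _
              have h0a : (0:ℝ) ≤ ε/2 * T₀.card := mul_nonneg (by linarith) h0b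
              exact add_le_add (mul_le_mul_of_nonneg_right hcard1 h0a)
                (mul_le_mul_of_nonneg_right hcard2 h0b)
      have hfinal : (M:ℝ) * (ε/2 * T₀.card) + (2 * (K:ℝ)) * T₀.card < ε * T.card := by
        have hTcast : (T.card : ℝ) = (M:ℝ) * T₀.card := by
          rw [hcardT]; push_cast; ring
        rw [hTcast]
        nlinarith [hεM, hT₀pos, mul_le_mul_of_nonneg_right hεM (le_trans zero_le_one hT₀pos)]
      linarith [hchain, hfinal]

end Step

section Main
variable {G : Type*} [CommGroup G]

lemma good_bot : Good (⊥ : Subgroup G) := by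
  intro S hS ε hε
  refine ⟨{1}, ⟨1, Finset.mem_singleton_self 1⟩, ⟨?_, {1}, ?_, ?_, ?_⟩, ?_⟩
  · simp
  · simp
  · simp [Set.pairwise_singleton]
  · simp
  · intro s hs
    have : s = 1 := by simpa using hS hs
    subst this
    simp [Finset.image_id']
    positivity

lemma good_list (L : List G) : Good (Subgroup.closure {x | x ∈ L}) := by
  induction L with
  | nil => simpa [Subgroup.closure_empty] using (good_bot (G := G))
  | cons a L ih =>
      have h1 : {x | x ∈ a :: L} = {a} ∪ {x | x ∈ L} := by
        ext x; simp [or_comm]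
      rw [h1, Subgroup.closure_union, ← Subgroup.zpowers_eq_closure, sup_comm]
      exact good_sup' _ a ih

theorem countable_abelian_monotilable'
    (G : Type*) [CommGroup G] [Countable G] :
    ∃ Fseq : ℕ → Finset G, IsFolnerSeq Fseq ∧ ∀ n, IsTile (Fseq n) := by
  obtain ⟨e, he⟩ := exists_surjective_nat G
  have key : ∀ n : ℕ, ∃ T : Finset G, T.Nonempty ∧
      TilesSub T (Subgroup.closure {x | x ∈ (List.range (n+1)).map e}) ∧
      ∀ s ∈ (Finset.range (n+1)).image e,
        (((T ∆ T.image (fun t => s * t)).card : ℝ)) < (1/(n+1) : ℝ) * T.card := by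
    intro n
    apply good_list ((List.range (n+1)).map e) ((Finset.range (n+1)).image e)
    · intro x hx
      simp only [Finset.coe_image, Set.mem_image, Finset.mem_coe, Finset.mem_range] at hx
      obtain ⟨i, hi, rfl⟩ := hx
      apply Subgroup.subset_closure
      simp only [Set.mem_setOf_eq, List.mem_map, List.mem_range]
      exact ⟨i, hi, rfl⟩
    · positivity
  choose Fseq hne htile hinv using key
  refine ⟨Fseq, ⟨hne, ?_⟩, fun n => (htile n).isTile⟩
  intro g
  obtain ⟨i, rfl⟩ := he g
  have hbound : ∀ n, i ≤ n →
      ((((Fseq n).image (fun t => e i * t)) ∆ (Fseq n)).card : ℝ) / ((Fseq n).card : ℝ)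
        ≤ 1/(n+1) := by
    intro n hin
    have hmem : e i ∈ (Finset.range (n+1)).image e :=
      Finset.mem_image.2 ⟨i, Finset.mem_range.2 (Nat.lt_succ_of_le hin), rfl⟩
    have h1 := hinv n (e i) hmem
    have hcard : (0:ℝ) < (Fseq n).card := by
      exact_mod_cast Finset.card_pos.2 (hne n)
    rw [div_le_iff₀ hcard]
    calc ((((Fseq n).image (fun t => e i * t)) ∆ (Fseq n)).card : ℝ)
        = (((Fseq n) ∆ (Fseq n).image (fun t => e i * t)).card : ℝ) := by rw [symmDiff_comm]
      _ ≤ 1/(n+1) * (Fseq n).card := le_of_lt h1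
  have h2 : Filter.Tendsto (fun n : ℕ => (1:ℝ)/(n+1)) Filter.atTop (nhds 0) :=
    tendsto_one_div_add_atTop_nhds_zero_nat
  apply tendsto_of_tendsto_of_tendsto_of_le_of_le' tendsto_const_nhds h2
  · filter_upwards with n
    positivity
  · filter_upwards [Filter.eventually_ge_atTop i] with n hn
    exact hbound n hn

end Main

/-- Every countable abelian group is monotilable: it admits a
Følner sequence consisting of tiles. -/
theorem countable_abelian_monotilable
    (G : Type*) [CommGroup G] [Countable G] :
    ∃ Fseq : ℕ → Finset G, IsFolnerSeq Fseq ∧ ∀ n, IsTile (Fseq n) :=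
  countable_abelian_monotilable' G
end

section
/- Let G be a countable abelian group. Then for every finite subset F ⊆ G and every ε > 0, there exists a finite subset T ⊆ G that is both a tile for G and (F, ε)-invariant, and which moreover contains the identity element e. -/
open MeasureTheory Filter
open scoped symmDiff Classical

/-!
Only the subgroup `H` generated by `F` matters: a tile of `H` becomes a tile of `G` after
translating it along a transversal of the cosets of `H`, and `(F, ε)`-invariance is a condition
inside `H`. By the structure theorem, `H ≅ ℤⁿ × K` with `K` finite. There the sets
`[0, N)ⁿ × K` tile (their translates by `(Nℤ)ⁿ × {0}` partition the group), and a shift by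
`w` with all `|wᵢ| ≤ W` keeps at least `(N - W)ⁿ ≥ (1 - nW/N) Nⁿ` points of the cube
(Bernoulli), so the cube is `(F, ε)`-invariant once `2nW/N < ε`.
-/

open Function Finset Pointwise

section Tiles

variable {G : Type*} [Group G]

theorem isTile_iff_exists_isComplement {T : Finset G} :
    IsTile T ↔ ∃ C : Set G, Subgroup.IsComplement (T : Set G) C := by
  constructor
  · rintro ⟨C, hdisj, hcover⟩
    refine ⟨C, ⟨fun ⟨t, c⟩ ⟨t', c'⟩ h => ?_, fun g => ?_⟩⟩
    · have hcc' : (c : G) = c' := by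
        by_contra hne
        exact Set.disjoint_left.mp (hdisj c.2 c'.2 hne) ⟨t, t.2, rfl⟩ ⟨t', t'.2, h.symm⟩
      have htt' : (t : G) = t' := by
        change (t : G) * c = t' * c' at h
        rw [hcc'] at h
        exact mul_right_cancel h
      ext <;> assumption
    · obtain ⟨c, hc, t, ht, rfl⟩ := Set.mem_iUnion₂.mp (hcover.ge (Set.mem_univ g))
      exact ⟨(⟨t, ht⟩, ⟨c, hc⟩), rfl⟩
  · rintro ⟨C, hC⟩
    refine ⟨C, fun c hc d hd hcd => Set.disjoint_left.mpr ?_, Set.eq_univ_of_forall fun g => ?_⟩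
    · rintro _ ⟨t, ht, rfl⟩ ⟨t', ht', h⟩
      exact hcd (congrArg (fun x => (x.2 : G)) (hC.1 (a₁ := (⟨t', ht'⟩, ⟨d, hd⟩))
        (a₂ := (⟨t, ht⟩, ⟨c, hc⟩)) h)).symm
    · obtain ⟨⟨⟨t, ht⟩, ⟨c, hc⟩⟩, rfl⟩ := hC.2 g
      exact Set.mem_biUnion hc ⟨t, ht, rfl⟩

theorem Subgroup.IsComplement.image_of_injective {A : Type*} [Group A] {f : A →* G}
    (hf : Injective f) {T C : Set A} {S : Set G} (hTC : Subgroup.IsComplement T C)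
    (hS : Subgroup.IsComplement (f.range : Set G) S) :
    Subgroup.IsComplement (f '' T) (f '' C * S) := by
  refine ⟨?_, fun g => ?_⟩
  · rintro ⟨⟨_, t, ht, rfl⟩, ⟨_, _, ⟨c, hc, rfl⟩, s, hs, rfl⟩⟩
      ⟨⟨_, t', ht', rfl⟩, ⟨_, _, ⟨c', hc', rfl⟩, s', hs', rfl⟩⟩ h
    simp only [← mul_assoc, ← map_mul] at h
    have h₁ := hS.1 (a₁ := (⟨_, t * c, rfl⟩, ⟨s, hs⟩)) (a₂ := (⟨_, t' * c', rfl⟩, ⟨s', hs'⟩)) h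
    simp only [Prod.mk.injEq, Subtype.mk.injEq] at h₁
    have h₂ := hTC.1 (a₁ := (⟨t, ht⟩, ⟨c, hc⟩)) (a₂ := (⟨t', ht'⟩, ⟨c', hc'⟩))
      (hf (congrArg Subtype.val h₁.1))
    simp only [Prod.mk.injEq, Subtype.mk.injEq] at h₂
    simp [h₁.2, h₂.1, h₂.2]
  · obtain ⟨⟨⟨_, a, rfl⟩, ⟨s, hs⟩⟩, rfl⟩ := hS.2 g
    obtain ⟨⟨⟨t, ht⟩, ⟨c, hc⟩⟩, rfl⟩ := hTC.2 a
    exact ⟨(⟨f t, t, ht, rfl⟩, ⟨f c * s, Set.mul_mem_mul ⟨c, hc, rfl⟩ hs⟩), by simp [mul_assoc]⟩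

theorem Subgroup.IsComplement.prod {H : Type*} [Group H] {S T : Set G} {S' T' : Set H}
    (h : Subgroup.IsComplement S T) (h' : Subgroup.IsComplement S' T') :
    Subgroup.IsComplement (S ×ˢ S') (T ×ˢ T') := by
  refine ⟨fun ⟨s, t⟩ ⟨s', t'⟩ hst => ?_, fun g => ?_⟩
  · have h₁ := h.1 (a₁ := (⟨s.1.1, s.2.1⟩, ⟨t.1.1, t.2.1⟩))
      (a₂ := (⟨s'.1.1, s'.2.1⟩, ⟨t'.1.1, t'.2.1⟩)) (congrArg Prod.fst hst)
    have h₂ := h'.1 (a₁ := (⟨s.1.2, s.2.2⟩, ⟨t.1.2, t.2.2⟩))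
      (a₂ := (⟨s'.1.2, s'.2.2⟩, ⟨t'.1.2, t'.2.2⟩)) (congrArg Prod.snd hst)
    simp only [Prod.mk.injEq, Subtype.mk.injEq] at h₁ h₂
    ext <;> simp [h₁, h₂]
  · obtain ⟨⟨s, t⟩, hst⟩ := h.2 g.1
    obtain ⟨⟨s', t'⟩, hst'⟩ := h'.2 g.2
    exact ⟨(⟨(s, s'), s.2, s'.2⟩, ⟨(t, t'), t.2, t'.2⟩), Prod.ext hst hst'⟩

theorem Subgroup.IsComplement.pi {ι : Type*} {H : ι → Type*} [∀ i, Group (H i)]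
    {S T : ∀ i, Set (H i)} (h : ∀ i, Subgroup.IsComplement (S i) (T i)) :
    Subgroup.IsComplement (Set.univ.pi S) (Set.univ.pi T) := by
  refine ⟨fun ⟨s, t⟩ ⟨s', t'⟩ hst => ?_, fun g => ?_⟩
  · have hi i := (h i).1 (a₁ := (⟨s.1 i, s.2 i trivial⟩, ⟨t.1 i, t.2 i trivial⟩))
      (a₂ := (⟨s'.1 i, s'.2 i trivial⟩, ⟨t'.1 i, t'.2 i trivial⟩)) (congrFun hst i)
    simp only [Prod.mk.injEq, Subtype.mk.injEq] at hi
    ext i <;> simp [hi]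
  · choose st hst using fun i => (h i).2 (g i)
    exact ⟨(⟨fun i => (st i).1, fun i _ => (st i).1.2⟩,
      ⟨fun i => (st i).2, fun i _ => (st i).2.2⟩), funext hst⟩

theorem IsTile.image {A : Type*} [Group A] {f : A →* G} (hf : Injective f) {T : Finset A}
    (hT : IsTile T) : IsTile (T.image f) := by
  obtain ⟨C, hC⟩ := isTile_iff_exists_isComplement.mp hT
  obtain ⟨S, hS, -⟩ := Subgroup.exists_isComplement_right f.range 1
  exact isTile_iff_exists_isComplement.mpr ⟨_, by simpa using hC.image_of_injective hf hS⟩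

theorem IsTile.product {H : Type*} [Group H] {T : Finset G} {T' : Finset H} (hT : IsTile T)
    (hT' : IsTile T') : IsTile (T ×ˢ T') := by
  obtain ⟨C, hC⟩ := isTile_iff_exists_isComplement.mp hT
  obtain ⟨C', hC'⟩ := isTile_iff_exists_isComplement.mp hT'
  exact isTile_iff_exists_isComplement.mpr ⟨_, by simpa using hC.prod hC'⟩

theorem IsTile.piFinset {ι : Type*} [Fintype ι] {H : ι → Type*} [∀ i, Group (H i)]
    {T : ∀ i, Finset (H i)} (hT : ∀ i, IsTile (T i)) : IsTile (Fintype.piFinset T) := by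
  choose C hC using fun i => isTile_iff_exists_isComplement.mp (hT i)
  exact isTile_iff_exists_isComplement.mpr ⟨_, by simpa using Subgroup.IsComplement.pi hC⟩

theorem isTile_univ [Fintype G] : IsTile (univ : Finset G) :=
  isTile_iff_exists_isComplement.mpr ⟨{1}, by simpa using Subgroup.isComplement_univ_singleton⟩

end Tiles

section Invariance

variable {G : Type*} [Group G] {F T : Finset G} {ε : ℝ}

theorem Finset.card_symmDiff_smul_finset {α : Type*} [DecidableEq α] [MulAction G α]
    (s : Finset α) (a : G) : #(s ∆ (a • s)) = 2 * (#s - #(s ∩ a • s)) := by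
  rw [symmDiff_def, sup_eq_union, card_union_of_disjoint disjoint_sdiff_sdiff]
  have h₁ := card_sdiff_add_card_inter s (a • s)
  have h₂ := card_sdiff_add_card_inter (a • s) s
  rw [inter_comm, card_smul_finset] at h₂
  omega

-- `IsInv` is elaborated with classical `DecidableEq`; this form rewrites with any instance.
theorem isInv_iff_smul [DecidableEq G] :
    IsInv F T ε ↔ ∀ g ∈ F, ((T ∆ (g • T)).card : ℝ) < ε * T.card := by
  simp only [IsInv, smul_finset_def, smul_eq_mul]
  convert Iff.rfl

theorem IsInv.mono {F' : Finset G} (h : IsInv F T ε) (hF : F' ⊆ F) : IsInv F' T ε :=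
  fun g hg => h g (hF hg)

theorem IsInv.image {A : Type*} [Group A] {f : A →* G} (hf : Injective f) {F T : Finset A}
    (h : IsInv F T ε) : IsInv (F.image f) (T.image f) ε := by
  rw [isInv_iff_smul]
  intro g hg
  obtain ⟨a, ha, rfl⟩ := mem_image.mp hg
  rw [← image_smul_distrib, ← image_symmDiff _ _ hf, card_image_of_injective _ hf,
    card_image_of_injective _ hf]
  exact h a ha

theorem IsInv.product_univ {K : Type*} [Group K] [Fintype K] {F : Finset (G × K)}
    (h : IsInv (F.image Prod.fst) T ε) : IsInv F (T ×ˢ univ) ε := by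
  rw [isInv_iff_smul]
  intro g hg
  have hsmul : g • (T ×ˢ univ) = (g.1 • T) ×ˢ (univ : Finset K) := by
    ext x
    simp only [← inv_smul_mem_iff, mem_product, smul_eq_mul, Prod.fst_mul, Prod.fst_inv,
      mem_univ, and_true]
  have hsymm : (T ×ˢ univ) ∆ ((g.1 • T) ×ˢ univ) = (T ∆ (g.1 • T)) ×ˢ (univ : Finset K) := by
    ext x
    simp only [mem_symmDiff, mem_product, mem_univ, and_true]
  rw [hsmul, hsymm, card_product, card_product, Nat.cast_mul, Nat.cast_mul, ← mul_assoc]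
  exact mul_lt_mul_of_pos_right ((isInv_iff_smul.mp h) g.1 (mem_image_of_mem _ hg))
    (by exact_mod_cast card_pos.mpr univ_nonempty)

end Invariance

def HasInvariantTiles (G : Type*) [Group G] : Prop :=
  ∀ (F : Finset G) (ε : ℝ), 0 < ε → ∃ T : Finset G, IsTile T ∧ IsInv F T ε ∧ 1 ∈ T

section IntCube

open Multiplicative

noncomputable def intInterval (N : ℕ) : Finset (Multiplicative ℤ) :=
  (Ico (0 : ℤ) N).map ofAdd.toEmbedding

noncomputable def intCube (ι : Type*) [Fintype ι] (N : ℕ) : Finset (ι → Multiplicative ℤ) :=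
  Fintype.piFinset fun _ => intInterval N

variable {N : ℕ}

theorem isTile_intInterval (hN : 0 < N) : IsTile (intInterval N) := by
  refine isTile_iff_exists_isComplement.mpr
    ⟨Set.range fun q : ℤ => ofAdd (N * q), ?_, fun x => ?_⟩
  · rintro ⟨⟨_, hx⟩, ⟨_, q, rfl⟩⟩ ⟨⟨_, hx'⟩, ⟨_, q', rfl⟩⟩ h
    simp only [intInterval, coe_map, Set.mem_image, mem_coe, mem_Ico] at hx hx'
    obtain ⟨r, hr, rfl⟩ := hx
    obtain ⟨r', hr', rfl⟩ := hx'
    have hadd : r + N * q = r' + N * q' := congrArg toAdd h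
    have hq := (Int.ediv_emod_unique (b := N) (by omega)).mpr ⟨hadd, hr⟩
    have hq' := (Int.ediv_emod_unique (b := N) (q := q') (by omega)).mpr ⟨rfl, hr'⟩
    have hrr : r = r' := hq.2.symm.trans hq'.2
    have hqq : q = q' := hq.1.symm.trans hq'.1
    subst hrr hqq
    rfl
  · refine ⟨(⟨ofAdd (toAdd x % N), ?_⟩, ⟨ofAdd (N * (toAdd x / N)), toAdd x / N, rfl⟩), ?_⟩
    · simp only [intInterval, coe_map, Set.mem_image, mem_coe, mem_Ico]
      exact ⟨_, ⟨Int.emod_nonneg _ (by omega), Int.emod_lt_of_pos _ (by omega)⟩, rfl⟩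
    · exact congrArg ofAdd (Int.emod_add_mul_ediv (toAdd x) N)

theorem smul_intInterval (g : Multiplicative ℤ) :
    g • intInterval N = (Ico (toAdd g) (toAdd g + N)).map ofAdd.toEmbedding := by
  ext x
  simp only [intInterval, ← inv_smul_mem_iff, mem_map_equiv, mem_Ico, smul_eq_mul, toAdd_mul,
    toAdd_inv, ofAdd_symm_eq]
  omega

theorem natCast_sub_abs_le_card_inter_smul_intInterval (g : Multiplicative ℤ) :
    (N : ℤ) - |toAdd g| ≤ #(intInterval N ∩ g • intInterval N) := by
  rw [smul_intInterval, intInterval, ← map_inter, card_map, Ico_inter_Ico, Int.card_Ico]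
  cases abs_cases (toAdd g) <;> omega

theorem card_intCube (ι : Type*) [Fintype ι] (N : ℕ) : #(intCube ι N) = N ^ Fintype.card ι := by
  simp [intCube, intInterval]

theorem card_intCube_inter_smul {ι : Type*} [Fintype ι] (g : ι → Multiplicative ℤ) :
    #(intCube ι N ∩ g • intCube ι N) = ∏ i, #(intInterval N ∩ g i • intInterval N) := by
  rw [intCube, ← Fintype.piFinset_smul_finset, ← Fintype.piFinset_inter, Fintype.card_piFinset]

theorem card_symmDiff_smul_intCube_le {ι : Type*} [Fintype ι] {W : ℕ} (hN : 0 < N)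
    (hWN : W ≤ N) {g : ι → Multiplicative ℤ} (hg : ∀ i, |toAdd (g i)| ≤ W) :
    (#(intCube ι N ∆ (g • intCube ι N)) : ℝ) ≤
      2 * (Fintype.card ι * W / N) * #(intCube ι N) := by
  have hNW : (0 : ℝ) ≤ 1 - W / N := by
    rw [sub_nonneg, div_le_one (by positivity)]
    exact_mod_cast hWN
  have hcoord i : (N : ℝ) * (1 - W / N) ≤ #(intInterval N ∩ g i • intInterval N) := by
    have h := natCast_sub_abs_le_card_inter_smul_intInterval (N := N) (g i)
    have hgi := hg i
    rw [mul_one_sub, mul_div_cancel₀ _ (by positivity)]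
    exact_mod_cast (by omega : (N : ℤ) - W ≤ #(intInterval N ∩ g i • intInterval N))
  have hinter : (N : ℝ) ^ Fintype.card ι * (1 - Fintype.card ι * (W / N)) ≤
      #(intCube ι N ∩ g • intCube ι N) := calc
    _ ≤ (N : ℝ) ^ Fintype.card ι * (1 - W / N) ^ Fintype.card ι := by
      gcongr
      simpa [sub_eq_add_neg] using
        one_add_mul_le_pow (a := -(W / N : ℝ)) (by linarith) (Fintype.card ι)
    _ = ∏ _i : ι, (N : ℝ) * (1 - W / N) := by rw [prod_const, card_univ, mul_pow]
    _ ≤ ∏ i, (#(intInterval N ∩ g i • intInterval N) : ℝ) :=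
      prod_le_prod (fun _ _ => mul_nonneg (Nat.cast_nonneg N) hNW) fun i _ => hcoord i
    _ = #(intCube ι N ∩ g • intCube ι N) := by rw [card_intCube_inter_smul]; push_cast; rfl
  have hsub : #(intCube ι N ∩ g • intCube ι N) ≤ #(intCube ι N) := card_le_card inter_subset_left
  rw [card_symmDiff_smul_finset, Nat.cast_mul, Nat.cast_sub hsub, card_intCube]
  push_cast
  linear_combination 2 * hinter

theorem hasInvariantTiles_pi_int (ι : Type*) [Fintype ι] :
    HasInvariantTiles (ι → Multiplicative ℤ) := by
  intro F ε hε
  set W := F.sup fun g => univ.sup fun i => (toAdd (g i)).natAbs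
  obtain ⟨N, hN⟩ := exists_nat_gt (max (W : ℝ) (2 * (Fintype.card ι * W) / ε))
  have hWN : W < N := by exact_mod_cast (le_max_left _ _).trans_lt hN
  have hN₀ : 0 < N := by omega
  refine ⟨intCube ι N, IsTile.piFinset fun _ => isTile_intInterval hN₀, ?_, ?_⟩
  · rw [isInv_iff_smul]
    intro g hg
    have hgW i : |toAdd (g i)| ≤ W := by
      rw [Int.abs_eq_natAbs]
      exact_mod_cast (le_sup (f := fun i => (toAdd (g i)).natAbs) (mem_univ i)).trans
        (le_sup (f := fun g : ι → Multiplicative ℤ => univ.sup fun i => (toAdd (g i)).natAbs) hg)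
    have hratio : 2 * (Fintype.card ι * W / N : ℝ) < ε := by
      rw [← mul_div_assoc, div_lt_iff₀ (by positivity), ← div_lt_iff₀' hε]
      exact (le_max_right _ _).trans_lt hN
    calc _ ≤ 2 * (Fintype.card ι * W / N : ℝ) * #(intCube ι N) :=
          card_symmDiff_smul_intCube_le hN₀ hWN.le hgW
      _ < ε * #(intCube ι N) := by
          gcongr
          rw [card_intCube]
          positivity
  · simp [intCube, intInterval, hN₀]

end IntCube

namespace HasInvariantTiles

theorem prod {A K : Type*} [Group A] [Group K] [Finite K] (h : HasInvariantTiles A) :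
    HasInvariantTiles (A × K) := by
  have := Fintype.ofFinite K
  intro F ε hε
  obtain ⟨T, hT, hinv, h₁⟩ := h (F.image Prod.fst) ε hε
  exact ⟨T ×ˢ univ, hT.product isTile_univ, hinv.product_univ, mem_product.mpr ⟨h₁, mem_univ 1⟩⟩

theorem exists_of_injective {A G : Type*} [Group A] [Group G] (h : HasInvariantTiles A)
    {f : A →* G} (hf : Injective f) {F : Finset G} (hF : (F : Set G) ⊆ Set.range f) {ε : ℝ}
    (hε : 0 < ε) : ∃ T : Finset G, IsTile T ∧ IsInv F T ε ∧ 1 ∈ T := by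
  obtain ⟨T, hT, hinv, h₁⟩ := h (F.preimage f hf.injOn) ε hε
  refine ⟨T.image f, hT.image hf, (hinv.image hf).mono fun g hg => ?_,
    mem_image.mpr ⟨1, h₁, map_one f⟩⟩
  rw [image_preimage]
  exact mem_filter.mpr ⟨hg, hF hg⟩

end HasInvariantTiles

theorem exists_invariant_tile_containing_one_general
    {G : Type*} [CommGroup G]
    (F : Finset G) (ε : ℝ) (hε : 0 < ε) :
    ∃ T : Finset G, IsTile T ∧ IsInv F T ε ∧ (1 : G) ∈ T := by
  let H := Subgroup.closure (F : Set G)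
  obtain ⟨ι, j, _, _, p, hp, e, ⟨φ⟩⟩ := CommGroup.equiv_free_prod_prod_multiplicative_zmod H
  have (i : ι) : NeZero (p i ^ e i) := ⟨pow_ne_zero _ (hp i).ne_zero⟩
  refine (hasInvariantTiles_pi_int j).prod.exists_of_injective
    (f := H.subtype.comp φ.symm.toMonoidHom) (H.subtype_injective.comp φ.symm.injective) ?_ hε
  intro g hg
  exact ⟨φ ⟨g, Subgroup.subset_closure hg⟩, by simp⟩

/-- In a countable abelian group, for every finite `F ⊆ G` and
`ε > 0` there is a tile `T` for `G` that is `(F, ε)`-invariant and contains the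
identity. -/
theorem exists_invariant_tile_containing_one
    {G : Type*} [CommGroup G] [Countable G]
    (F : Finset G) (ε : ℝ) (hε : 0 < ε) :
    ∃ T : Finset G, IsTile T ∧ IsInv F T ε ∧ (1 : G) ∈ T :=
  exists_invariant_tile_containing_one_general F ε hε
end
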